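/- arXiv:1508.00481 — 8 statements merged into one kernel-verified Lean document; each statement's English description precedes it below -/
import Mathlib

section
/- Let m, n, d be positive integers and x ≥ 1 an integer, and let H = (h_{k,ℓ}) be an n × m matrix with entries in {0,1}. Then the following are equivalent: (i) the n rows of H are pairwise distinct and the set of rows of H is an (m,n,d,x) X-code; (ii) for every test output b ∈ {0,1}^n and every reference output c ∈ {0,1,X}^n such that the error set E = {k : c_k ≠ X and b_k ≠ c_k} satisfies 1 ≤ |E| ≤ d and the unknown set {k : c_k = X} has at most x elements, there exists a column index ℓ ∈ {1,…,m} such that (Σ_{k=1}^n b_k·h_{k,ℓ}) + (Σ_{k=1}^n c_k·h_{k,ℓ}) = 1, where all sums and products are computed in the X-algebra 𝕏₂. -/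
/-!
Write `E` for the error set and `U` for the unknown set of a pair `(b, c)`. In `𝕏₂` the
syndrome of column `ℓ` is `X` as soon as a row of `U` has a `1` in column `ℓ`; otherwise it
equals `∑_{k ∈ E} h_{k,ℓ}` computed in `𝔽₂`. So the compaction condition says exactly that for
all disjoint sets of row indices `U`, `E` with `|U| ≤ x` and `1 ≤ |E| ≤ d` some column sums to
`1` over `E` and vanishes on `U`; every such pair `(U, E)` arises, from `b = 0` and `c` equal to
`1` on `E`, `X` on `U` and `0` elsewhere. For injective `H` this is the X-code property of its
rows, and taking `|U| = |E| = 1` shows that it forces `H` to be injective.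
-/

/-- An `(·,·,d,x)` X-code on coordinate set `ι`. -/
def IsXCode {ι : Type*} [Fintype ι] (d x : ℕ) (X : Finset (ι → ZMod 2)) : Prop :=
  ∀ S₁ S₂ : Finset (ι → ZMod 2), S₁ ⊆ X → S₂ ⊆ X → Disjoint S₁ S₂ →
    S₁.card ≤ x → 1 ≤ S₂.card → S₂.card ≤ d →
    ∃ j : ι, (∑ s ∈ S₂, s j) = 1 ∧ ∀ s ∈ S₁, s j = 0

/-- The X-algebra `𝕏₂` is `WithBot (ZMod 2)`, where the unknown logic value X is `⊥`.
Its addition (the `WithBot` addition, for which `⊥ + a = a + ⊥ = ⊥` and addition of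
non-`⊥` elements is performed in `𝔽₂`) is exactly the X-algebra addition.
This is the X-algebra multiplication of an element of `𝕏₂` by an element of `𝔽₂`:
`0·X = 0`, `1·X = X`, and products of elements of `𝔽₂` are computed in `𝔽₂`. -/
def xmul (a : WithBot (ZMod 2)) (h : ZMod 2) : WithBot (ZMod 2) :=
  if h = 0 then (0 : WithBot (ZMod 2)) else a

open Finset

section XAlgebra

lemma xmul_eq_bot_iff {a : WithBot (ZMod 2)} {h : ZMod 2} :
    xmul a h = ⊥ ↔ a = ⊥ ∧ h ≠ 0 := by
  unfold xmul
  split_ifs with h0 <;> simp [h0]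

lemma xmul_eq_coe_unbotD {a : WithBot (ZMod 2)} {h : ZMod 2} (ha : a = ⊥ → h = 0) :
    xmul a h = ((a.unbotD 0 * h : ZMod 2) : WithBot (ZMod 2)) := by
  unfold xmul
  split_ifs with h0
  · simp [h0]
  · obtain ⟨z, rfl⟩ := WithBot.ne_bot_iff_exists.mp fun hbot => h0 (ha hbot)
    have h1 : h = 1 := by clear ha; revert h0; revert h; decide
    simp [h1]

lemma add_unbotD_mul_eq_ite (b h : ZMod 2) {a : WithBot (ZMod 2)} (ha : a = ⊥ → h = 0) :
    (b + a.unbotD 0) * h = if a ≠ ⊥ ∧ a ≠ (b : WithBot (ZMod 2)) then h else 0 := by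
  induction a with
  | bot => simp [ha rfl]
  | coe z =>
    have hbz : b + z = if z = b then 0 else 1 := by clear ha; revert b z; decide
    by_cases hz : z = b <;> simp [hbz, hz, CharTwo.add_self_eq_zero]

end XAlgebra

variable {ι κ : Type*}

def IsXCodeFamily (d x : ℕ) (H : ι → κ → ZMod 2) : Prop :=
  ∀ U E : Finset ι, Disjoint U E → U.card ≤ x → 1 ≤ E.card → E.card ≤ d →
    ∃ j, ∑ k ∈ E, H k j = 1 ∧ ∀ k ∈ U, H k j = 0

theorem IsXCodeFamily.injective {d x : ℕ} {H : ι → κ → ZMod 2} (hH : IsXCodeFamily d x H)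
    (hd : 0 < d) (hx : 0 < x) : Function.Injective H := by
  intro k k' hkk'
  by_contra hne
  obtain ⟨j, h1, h0⟩ := hH {k'} {k} (disjoint_singleton.mpr (Ne.symm hne))
    (by rw [card_singleton]; exact hx) (by simp) (by rw [card_singleton]; exact hd)
  rw [sum_singleton, hkk', h0 k' (mem_singleton_self k')] at h1
  exact zero_ne_one h1

theorem isXCode_image_iff [Fintype ι] [Fintype κ] [DecidableEq (κ → ZMod 2)] {d x : ℕ}
    {H : ι → κ → ZMod 2} (hH : Function.Injective H) :
    IsXCode d x (univ.image H) ↔ IsXCodeFamily d x H := by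
  constructor
  · intro hcode U E hUE hU hE₁ hE₂
    obtain ⟨j, hj1, hj0⟩ := hcode (U.image H) (E.image H) (image_subset_image (subset_univ U))
      (image_subset_image (subset_univ E)) ((disjoint_image hH).mpr hUE)
      (by rwa [card_image_of_injective _ hH]) (by rwa [card_image_of_injective _ hH])
      (by rwa [card_image_of_injective _ hH])
    rw [sum_image fun _ _ _ _ h => hH h] at hj1
    exact ⟨j, hj1, fun k hk => hj0 (H k) (mem_image_of_mem H hk)⟩
  · intro hfam S₁ S₂ hS₁ hS₂ hS hS₁x hS₂₁ hS₂d
    obtain ⟨U, -, rfl⟩ := subset_image_iff.mp hS₁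
    obtain ⟨E, -, rfl⟩ := subset_image_iff.mp hS₂
    rw [card_image_of_injective _ hH] at hS₁x hS₂₁ hS₂d
    obtain ⟨j, hj1, hj0⟩ := hfam U E ((disjoint_image hH).mp hS) hS₁x hS₂₁ hS₂d
    refine ⟨j, by rwa [sum_image fun _ _ _ _ h => hH h], ?_⟩
    rintro _ hs
    obtain ⟨k, hk, rfl⟩ := mem_image.mp hs
    exact hj0 k hk

section Syndrome

variable [Fintype ι]

def errorSet (b : ι → ZMod 2) (c : ι → WithBot (ZMod 2)) : Finset ι :=
  univ.filter fun k => c k ≠ ⊥ ∧ c k ≠ ((b k : ZMod 2) : WithBot (ZMod 2))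

def unknownSet (c : ι → WithBot (ZMod 2)) : Finset ι :=
  univ.filter fun k => c k = ⊥

lemma disjoint_unknownSet_errorSet (b : ι → ZMod 2) (c : ι → WithBot (ZMod 2)) :
    Disjoint (unknownSet c) (errorSet b c) := by
  rw [disjoint_left]
  intro k hU hE
  exact (mem_filter.mp hE).2.1 (mem_filter.mp hU).2

theorem syndrome_eq_one_iff (H : ι → κ → ZMod 2) (b : ι → ZMod 2)
    (c : ι → WithBot (ZMod 2)) (ℓ : κ) :
    (∑ k, ((b k * H k ℓ : ZMod 2) : WithBot (ZMod 2))) + ∑ k, xmul (c k) (H k ℓ) = 1 ↔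
      (∀ k ∈ unknownSet c, H k ℓ = 0) ∧ ∑ k ∈ errorSet b c, H k ℓ = 1 := by
  by_cases hU : ∀ k ∈ unknownSet c, H k ℓ = 0
  · have hU' : ∀ k, c k = ⊥ → H k ℓ = 0 := fun k hk => hU k (by simp [unknownSet, hk])
    rw [and_iff_right hU, sum_congr rfl fun k _ => xmul_eq_coe_unbotD (hU' k),
      ← WithBot.coe_sum, ← WithBot.coe_sum, ← WithBot.coe_add, WithBot.coe_eq_one, ← sum_add_distrib,
      errorSet, sum_filter]
    simp only [← add_mul, add_unbotD_mul_eq_ite _ _ (hU' _)]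
  · obtain ⟨k, hk, hHk⟩ := not_forall₂.mp hU
    have hX : ∑ k, xmul (c k) (H k ℓ) = ⊥ :=
      WithBot.sum_eq_bot_iff.mpr ⟨k, mem_univ k, xmul_eq_bot_iff.mpr ⟨(mem_filter.mp hk).2, hHk⟩⟩
    simp [hX, hU]

section ReferenceOutput

variable [DecidableEq ι]

def referenceOutput (U E : Finset ι) (k : ι) : WithBot (ZMod 2) :=
  if k ∈ E then ((1 : ZMod 2) : WithBot (ZMod 2)) else if k ∈ U then ⊥ else
    ((0 : ZMod 2) : WithBot (ZMod 2))

lemma errorSet_zero_referenceOutput (U E : Finset ι) :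
    errorSet 0 (referenceOutput U E) = E := by
  ext k
  by_cases hE : k ∈ E <;> by_cases hU : k ∈ U <;>
    simp [errorSet, referenceOutput, hE, hU]

lemma unknownSet_referenceOutput {U E : Finset ι} (hUE : Disjoint U E) :
    unknownSet (referenceOutput U E) = U := by
  ext k
  by_cases hE : k ∈ E
  · simp [unknownSet, referenceOutput, hE, disjoint_right.mp hUE hE]
  · by_cases hU : k ∈ U <;> simp [unknownSet, referenceOutput, hE, hU]

end ReferenceOutput

theorem isXCodeFamily_iff_forall_syndrome_eq_one [DecidableEq ι] (d x : ℕ)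
    (H : ι → κ → ZMod 2) :
    IsXCodeFamily d x H ↔
      ∀ (b : ι → ZMod 2) (c : ι → WithBot (ZMod 2)),
        1 ≤ (errorSet b c).card → (errorSet b c).card ≤ d → (unknownSet c).card ≤ x →
        ∃ ℓ, (∑ k, ((b k * H k ℓ : ZMod 2) : WithBot (ZMod 2))) +
          ∑ k, xmul (c k) (H k ℓ) = 1 := by
  constructor
  · intro hfam b c hE₁ hEd hUx
    obtain ⟨ℓ, hsum, hzero⟩ :=
      hfam (unknownSet c) (errorSet b c) (disjoint_unknownSet_errorSet b c) hUx hE₁ hEd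
    exact ⟨ℓ, (syndrome_eq_one_iff H b c ℓ).mpr ⟨hzero, hsum⟩⟩
  · intro hsyn U E hUE hUx hE₁ hEd
    have hE := errorSet_zero_referenceOutput U E
    have hU := unknownSet_referenceOutput hUE
    obtain ⟨ℓ, hℓ⟩ := hsyn 0 (referenceOutput U E) (by rwa [hE]) (by rwa [hE]) (by rwa [hU])
    rw [syndrome_eq_one_iff, hE, hU] at hℓ
    exact ⟨ℓ, hℓ.2, hℓ.1⟩

end Syndrome

theorem xcode_iff_xcompact_general (m n d x : ℕ) (hd : 0 < d)
    (hx : 1 ≤ x) (H : Fin n → Fin m → ZMod 2) :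
    (Function.Injective H ∧ IsXCode d x (Finset.univ.image H)) ↔
      (∀ (b : Fin n → ZMod 2) (c : Fin n → WithBot (ZMod 2)),
        1 ≤ (Finset.univ.filter fun k =>
              c k ≠ ⊥ ∧ c k ≠ ((b k : ZMod 2) : WithBot (ZMod 2))).card →
        (Finset.univ.filter fun k =>
              c k ≠ ⊥ ∧ c k ≠ ((b k : ZMod 2) : WithBot (ZMod 2))).card ≤ d →
        (Finset.univ.filter fun k => c k = ⊥).card ≤ x →
        ∃ ℓ : Fin m,
          (∑ k, ((b k * H k ℓ : ZMod 2) : WithBot (ZMod 2))) +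
            (∑ k, xmul (c k) (H k ℓ)) = 1) := by
  refine Iff.trans ?_ (isXCodeFamily_iff_forall_syndrome_eq_one d x H)
  constructor
  · rintro ⟨hH, hcode⟩
    exact (isXCode_image_iff hH).mp hcode
  · intro hfam
    have hH := hfam.injective hd hx
    exact ⟨hH, (isXCode_image_iff hH).mpr hfam⟩

/-- Proposition 1: an `n × m` binary matrix `H` has pairwise distinct rows forming an
`(m,n,d,x)` X-code iff for every test output `b ∈ {0,1}ⁿ` and reference output
`c ∈ {0,1,X}ⁿ` with between `1` and `d` error bits and at most `x` unknown logic values,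
some column `ℓ` satisfies `(Σₖ bₖ·hₖℓ) + (Σₖ cₖ·hₖℓ) = 1` in the X-algebra `𝕏₂`. -/
theorem xcode_iff_xcompact (m n d x : ℕ) (hm : 0 < m) (hn : 0 < n) (hd : 0 < d)
    (hx : 1 ≤ x) (H : Fin n → Fin m → ZMod 2) :
    (Function.Injective H ∧ IsXCode d x (Finset.univ.image H)) ↔
      (∀ (b : Fin n → ZMod 2) (c : Fin n → WithBot (ZMod 2)),
        1 ≤ (Finset.univ.filter fun k =>
              c k ≠ ⊥ ∧ c k ≠ ((b k : ZMod 2) : WithBot (ZMod 2))).card →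
        (Finset.univ.filter fun k =>
              c k ≠ ⊥ ∧ c k ≠ ((b k : ZMod 2) : WithBot (ZMod 2))).card ≤ d →
        (Finset.univ.filter fun k => c k = ⊥).card ≤ x →
        ∃ ℓ : Fin m,
          (∑ k, ((b k * H k ℓ : ZMod 2) : WithBot (ZMod 2))) +
            (∑ k, xmul (c k) (H k ℓ)) = 1) :=
  xcode_iff_xcompact_general m n d x hd hx H
end

section
/- Let m, n, d be positive integers and x ≥ 1 an integer. Every (m,n,d,x) X-code is also an (m,n,d+1,x-1) X-code. -/
/-!
Given `S₂` with `d + 1` elements, move one of its vectors `v` over to `S₁`. The `(d, x)`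
property yields a coordinate where `S₂ \ {v}` sums to `1` and `v` vanishes together with
`S₁`, so `S₂` sums to `1` there as well.
-/

namespace IsXCode

variable {ι : Type*} [Fintype ι] {X : Finset (ι → ZMod 2)} {d x : ℕ}

theorem mono {d' x' : ℕ} (h : IsXCode d x X) (hd : d' ≤ d) (hx : x' ≤ x) :
    IsXCode d' x' X :=
  fun S₁ S₂ h₁ h₂ hdisj hc₁ hc₂ hc₃ => h S₁ S₂ h₁ h₂ hdisj (hc₁.trans hx) hc₂ (hc₃.trans hd)

theorem exists_coord_of_card_eq_succ (h : IsXCode d x X) (hd : 0 < d)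
    {S₁ S₂ : Finset (ι → ZMod 2)} (h₁ : S₁ ⊆ X) (h₂ : S₂ ⊆ X) (hdisj : Disjoint S₁ S₂)
    (hc₁ : S₁.card < x) (hc₂ : S₂.card = d + 1) :
    ∃ j : ι, (∑ s ∈ S₂, s j) = 1 ∧ ∀ s ∈ S₁, s j = 0 := by
  obtain ⟨v, hv⟩ : S₂.Nonempty := Finset.card_pos.mp (by omega)
  have hvS₁ : v ∉ S₁ := Finset.disjoint_right.mp hdisj hv
  have hdisj' : Disjoint (insert v S₁) (S₂.erase v) :=
    Finset.disjoint_insert_left.mpr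
      ⟨Finset.notMem_erase v S₂, hdisj.mono_right (Finset.erase_subset v S₂)⟩
  have hcard_erase : (S₂.erase v).card = d := by
    rw [Finset.card_erase_of_mem hv, hc₂, Nat.add_sub_cancel]
  obtain ⟨j, hsum, hzero⟩ := h (insert v S₁) (S₂.erase v)
    (Finset.insert_subset (h₂ hv) h₁) ((Finset.erase_subset v S₂).trans h₂) hdisj'
    (by rw [Finset.card_insert_of_notMem hvS₁]; omega) (by omega) hcard_erase.le
  refine ⟨j, ?_, fun s hs => hzero s (Finset.mem_insert_of_mem hs)⟩
  rw [← Finset.add_sum_erase S₂ _ hv, hzero v (Finset.mem_insert_self v S₁), zero_add, hsum]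

theorem succ_pred (h : IsXCode d x X) (hd : 0 < d) (hx : 1 ≤ x) :
    IsXCode (d + 1) (x - 1) X := by
  intro S₁ S₂ h₁ h₂ hdisj hc₁ hc₂ hc₃
  rcases hc₃.lt_or_eq with hlt | heq
  · exact h.mono le_rfl (Nat.sub_le x 1) S₁ S₂ h₁ h₂ hdisj hc₁ hc₂ (Nat.lt_succ_iff.mp hlt)
  · exact h.exists_coord_of_card_eq_succ hd h₁ h₂ hdisj (by omega) heq

end IsXCode

theorem xcode_incr_d_decr_x_general (m d x : ℕ) (hd : 0 < d)
    (hx : 1 ≤ x) (X : Finset (Fin m → ZMod 2))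
    (hX : IsXCode d x X) : IsXCode (d + 1) (x - 1) X :=
  hX.succ_pred hd hx

/-- Every `(m,n,d,x)` X-code with `x ≥ 1` is also an `(m,n,d+1,x-1)` X-code. -/
theorem xcode_incr_d_decr_x (m n d x : ℕ) (hm : 0 < m) (hn : 0 < n) (hd : 0 < d)
    (hx : 1 ≤ x) (X : Finset (Fin m → ZMod 2)) (hcard : X.card = n)
    (hX : IsXCode d x X) : IsXCode (d + 1) (x - 1) X :=
  xcode_incr_d_decr_x_general m d x hd hx X hX
end

section
/- Let d ≥ 2 and let 𝒳 be a set of n distinct vectors in 𝔽₂^m, each of weight exactly two. Then 𝒳 is an (m,n,d-1,1) X-code if and only if 𝒳 is an (m,n,d,0) X-code. -/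
/-- The weight of a vector: its number of nonzero coordinates. -/
def wt {ι : Type*} [Fintype ι] (s : ι → ZMod 2) : ℕ :=
  (Finset.univ.filter fun j => s j ≠ 0).card

/-!
Over `𝔽₂` the weight modulo two is the sum of the coordinates, so a sum of weight-two vectors has
even weight. If the sum `v` of codewords `S₂` is covered by a codeword `a ∉ S₂`, then `v` is a
nonzero even-weight vector supported on the two-element support of `a`; hence `v = a` and
`S₂ ∪ {a}` is a set of at most `d` codewords summing to zero. Conversely, for `d` codewords
`S₂ ∋ s`, testing `S₂ \ {s}` against `{s}` yields a coordinate where the sum of `S₂` is one.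
-/

open Finset

lemma ZMod.two_eq_one_of_ne_zero {x : ZMod 2} (h : x ≠ 0) : x = 1 :=
  Fin.eq_one_of_ne_zero x h

lemma exists_eq_one_of_ne_zero {ι : Type*} {v : ι → ZMod 2} (hv : v ≠ 0) : ∃ j, v j = 1 := by
  obtain ⟨j, hj⟩ := Function.ne_iff.mp hv
  exact ⟨j, ZMod.two_eq_one_of_ne_zero hj⟩

section Weight

variable {ι : Type*} [Fintype ι]

lemma natCast_wt (u : ι → ZMod 2) : (wt u : ZMod 2) = ∑ j, u j := by
  rw [wt, ← sum_filter_ne_zero univ,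
    sum_congr rfl fun j hj => ZMod.two_eq_one_of_ne_zero (mem_filter.mp hj).2]
  simp

lemma even_wt_sum {S : Finset (ι → ZMod 2)} (hS : ∀ s ∈ S, Even (wt s)) :
    Even (wt (∑ s ∈ S, s)) := by
  rw [← ZMod.natCast_eq_zero_iff_even, natCast_wt]
  simp only [Finset.sum_apply]
  rw [sum_comm]
  exact sum_eq_zero fun s hs => by rw [← natCast_wt, ZMod.natCast_eq_zero_iff_even.mpr (hS s hs)]

lemma wt_le_wt_of_support_subset {u v : ι → ZMod 2} (h : ∀ j, u j ≠ 0 → v j ≠ 0) :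
    wt u ≤ wt v :=
  card_le_card (monotone_filter_right _ fun j _ => h j)

lemma eq_of_support_subset_of_wt_le {u v : ι → ZMod 2} (h : ∀ j, u j ≠ 0 → v j ≠ 0)
    (hwt : wt v ≤ wt u) : u = v := by
  have hsupp := eq_of_subset_of_card_le (monotone_filter_right _ fun j _ => h j) hwt
  funext j
  have hj : u j ≠ 0 ↔ v j ≠ 0 := by simpa using congrArg (j ∈ ·) hsupp
  by_cases hu : u j = 0
  · rw [hu, eq_comm]; simpa [hu] using hj
  · rw [ZMod.two_eq_one_of_ne_zero hu, ZMod.two_eq_one_of_ne_zero (hj.mp hu)]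

lemma eq_of_support_subset_of_wt_eq_two {u v : ι → ZMod 2} (h : ∀ j, u j ≠ 0 → v j ≠ 0)
    (hu : u ≠ 0) (heven : Even (wt u)) (hv : wt v = 2) : u = v := by
  refine eq_of_support_subset_of_wt_le h ?_
  have hpos : 0 < wt u := hammingNorm_pos_iff.mpr hu
  have hle := wt_le_wt_of_support_subset h
  obtain ⟨k, hk⟩ := heven
  omega

end Weight

section XCode

variable {ι : Type*} [Fintype ι] {X : Finset (ι → ZMod 2)} {d : ℕ}

lemma isXCode_zero_iff :
    IsXCode d 0 X ↔ ∀ S ⊆ X, 1 ≤ #S → #S ≤ d → ∑ s ∈ S, s ≠ 0 := by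
  constructor
  · intro h S hS hlo hhi hzero
    obtain ⟨j, hj, -⟩ := h ∅ S (empty_subset _) hS (disjoint_empty_left _) le_rfl hlo hhi
    simp [← Finset.sum_apply, hzero] at hj
  · intro h S₁ S₂ _ hS₂ _ hS₁ hlo hhi
    obtain rfl : S₁ = ∅ := card_eq_zero.mp (Nat.le_zero.mp hS₁)
    obtain ⟨j, hj⟩ := exists_eq_one_of_ne_zero (h S₂ hS₂ hlo hhi)
    exact ⟨j, by simpa [Finset.sum_apply] using hj, by simp⟩

lemma isXCode_succ_zero_of_one (h : IsXCode d 1 X) (hd : 1 ≤ d) : IsXCode (d + 1) 0 X := by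
  intro S₁ S₂ _ hS₂ _ hS₁ hlo hhi
  obtain rfl : S₁ = ∅ := card_eq_zero.mp (Nat.le_zero.mp hS₁)
  rcases Nat.lt_or_ge #S₂ (d + 1) with hlt | hge
  · obtain ⟨j, hj, -⟩ := h ∅ S₂ (empty_subset _) hS₂ (disjoint_empty_left _) (by simp) hlo
      (by omega)
    exact ⟨j, hj, by simp⟩
  · obtain ⟨s, hs⟩ := card_pos.mp (by omega : 0 < #S₂)
    have hcard := card_erase_of_mem hs
    obtain ⟨j, hj, hsj⟩ := h {s} (S₂.erase s) (singleton_subset_iff.mpr (hS₂ hs))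
      ((erase_subset s S₂).trans hS₂) (disjoint_singleton_left.mpr (notMem_erase s S₂))
      (by simp) (by omega) (by omega)
    refine ⟨j, ?_, by simp⟩
    rw [← add_sum_erase _ _ hs, hsj s (mem_singleton_self s), zero_add, hj]

lemma isXCode_one_of_succ_zero (hwt : ∀ s ∈ X, wt s = 2) (h : IsXCode (d + 1) 0 X) :
    IsXCode d 1 X := by
  rw [isXCode_zero_iff] at h
  intro S₁ S₂ hS₁ hS₂ hdisj hcard₁ hlo hhi
  have hsum : ∑ s ∈ S₂, s ≠ 0 := h S₂ hS₂ hlo (by omega)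
  obtain ⟨a, hS₁a⟩ := card_le_one_iff_subset_singleton.mp hcard₁
  rcases subset_singleton_iff.mp hS₁a with rfl | rfl
  · obtain ⟨j, hj⟩ := exists_eq_one_of_ne_zero hsum
    exact ⟨j, by simpa [Finset.sum_apply] using hj, by simp⟩
  have ha : a ∈ X := hS₁ (mem_singleton_self a)
  have haS₂ : a ∉ S₂ := disjoint_singleton_left.mp hdisj
  by_contra hcovered
  push Not at hcovered
  have hsupp : ∀ j, (∑ s ∈ S₂, s) j ≠ 0 → a j ≠ 0 := fun j hj => by
    simpa using hcovered j (by simpa [Finset.sum_apply] using ZMod.two_eq_one_of_ne_zero hj)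
  have hsum_eq : ∑ s ∈ S₂, s = a :=
    eq_of_support_subset_of_wt_eq_two hsupp hsum
      (even_wt_sum fun s hs => hwt s (hS₂ hs) ▸ even_two) (hwt a ha)
  refine h (insert a S₂) (insert_subset ha hS₂) (by simp)
    (by rw [card_insert_of_notMem haS₂]; omega) ?_
  rw [sum_insert haS₂, hsum_eq, ZModModule.add_self]

end XCode

theorem xcode_weight_two_iff_general (m d : ℕ) (hd : 2 ≤ d)
    (X : Finset (Fin m → ZMod 2)) (hwt : ∀ s ∈ X, wt s = 2) :
    IsXCode (d - 1) 1 X ↔ IsXCode d 0 X := by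
  obtain ⟨k, rfl⟩ : ∃ k, d = k + 1 := ⟨d - 1, by omega⟩
  exact ⟨fun h => isXCode_succ_zero_of_one h (by omega), isXCode_one_of_succ_zero hwt⟩

/-- For `d ≥ 2`, a set of `n` distinct vectors of `𝔽₂^m` of constant weight two is an
`(m,n,d-1,1)` X-code if and only if it is an `(m,n,d,0)` X-code. -/
theorem xcode_weight_two_iff (m n d : ℕ) (hd : 2 ≤ d)
    (X : Finset (Fin m → ZMod 2)) (hcard : X.card = n) (hwt : ∀ s ∈ X, wt s = 2) :
    IsXCode (d - 1) 1 X ↔ IsXCode d 0 X :=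
  xcode_weight_two_iff_general m d hd X hwt
end

section
/- Let (V,ℬ) be a 5-even-free Steiner triple system of order v (so |ℬ| = v(v-1)/6). Then the set of indicator vectors of the blocks of ℬ is a (v, v(v-1)/6, 3, 1) X-code of constant weight three, and it is moreover a (v, v(v-1)/6, 5, 0) X-code. -/
/-- A configuration is even if every point lies in an even number of its blocks. -/
def IsEvenConfig {V : Type*} [DecidableEq V] (C : Finset (Finset V)) : Prop :=
  ∀ p : V, Even (C.filter fun b => p ∈ b).card

/-! For a configuration `C` let `oddSet C` be the set of points covered an odd number of times.
The sum of the indicator vectors of `C` is the indicator of `oddSet C`, `C` is even iff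
`oddSet C = ∅`, and adding a block to `C` takes the symmetric difference with `oddSet C`.
The `(5, 0)` property is then 5-even-freeness itself. For the `(3, 1)` property one shows
`oddSet C ⊄ a` for a block `a ∉ C` and `1 ≤ |C| ≤ 3`. Two distinct blocks share at most one
point, so their symmetric difference has at least four points; this rules out `|C| = 2`, and, after
removing from `C` a block through a point of `oddSet C`, also `|C| = 3` unless `oddSet C` is `∅`
or `a`. In those two cases `C` or `C ∪ {a}` is an even configuration of at most four blocks.
The count `|ℬ| = v(v-1)/6` is the usual double count of pairs. -/

open Finset
open scoped symmDiff

variable {V : Type*} [DecidableEq V]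

structure IsSteinerTripleSystem (B : Finset (Finset V)) : Prop where
  card_eq_three : ∀ b ∈ B, #b = 3
  existsUnique_superset : ∀ p : Finset V, #p = 2 → ∃! b, b ∈ B ∧ p ⊆ b

def IsEvenFree (r : ℕ) (B : Finset (Finset V)) : Prop :=
  ∀ C ⊆ B, C.Nonempty → #C ≤ r → ¬ IsEvenConfig C

lemma IsEvenFree.mono {r s : ℕ} {B : Finset (Finset V)} (h : IsEvenFree s B) (hrs : r ≤ s) :
    IsEvenFree r B :=
  fun C hC hne hr => h C hC hne (hr.trans hrs)

def blockVec (b : Finset V) : V → ZMod 2 := fun p => if p ∈ b then 1 else 0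

lemma blockVec_eq_zero_iff {b : Finset V} {p : V} : blockVec b p = 0 ↔ p ∉ b := by
  simp [blockVec]

lemma blockVec_injective : Function.Injective (blockVec (V := V)) := by
  intro b b' h
  ext p
  rw [← not_iff_not, ← blockVec_eq_zero_iff, ← blockVec_eq_zero_iff, h]

lemma wt_blockVec [Fintype V] (b : Finset V) : wt (blockVec b) = #b := by
  simp [wt, blockVec_eq_zero_iff]

lemma card_symmDiff_add_two_mul_card_inter (s t : Finset V) :
    #(s ∆ t) + 2 * #(s ∩ t) = #s + #t := by
  rw [symmDiff_eq_sup_sdiff_inf, card_sdiff_of_subset (inf_le_left.trans le_sup_left)]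
  have := card_union_add_card_inter s t
  have := card_le_card (inter_subset_left.trans subset_union_left : s ∩ t ⊆ s ∪ t)
  simp only [sup_eq_union, inf_eq_inter]
  omega

section oddSet

variable [Fintype V]

def oddSet (C : Finset (Finset V)) : Finset V := {p | Odd #{b ∈ C | p ∈ b}}

variable {C : Finset (Finset V)} {b : Finset V} {p : V}

lemma mem_oddSet : p ∈ oddSet C ↔ Odd #{b ∈ C | p ∈ b} := by
  simp [oddSet]

lemma isEvenConfig_iff_oddSet_eq_empty : IsEvenConfig C ↔ oddSet C = ∅ := by
  simp [IsEvenConfig, eq_empty_iff_forall_notMem, mem_oddSet]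

lemma oddSet_insert (hb : b ∉ C) : oddSet (insert b C) = b ∆ oddSet C := by
  ext p
  rw [mem_oddSet, filter_insert, mem_symmDiff, mem_oddSet]
  by_cases hp : p ∈ b
  · rw [if_pos hp, card_insert_of_notMem (fun h => hb (mem_filter.1 h).1), Nat.odd_add_one]
    tauto
  · rw [if_neg hp]
    tauto

lemma oddSet_empty : oddSet (∅ : Finset (Finset V)) = ∅ := by
  simp [oddSet]

lemma oddSet_singleton (b : Finset V) : oddSet {b} = b := by
  have h := oddSet_insert (notMem_empty b)
  rwa [insert_empty, oddSet_empty, ← bot_eq_empty, symmDiff_bot] at h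

lemma exists_mem_of_mem_oddSet (hp : p ∈ oddSet C) : ∃ b ∈ C, p ∈ b := by
  obtain ⟨b, hb⟩ := card_pos.1 (mem_oddSet.1 hp).pos
  exact ⟨b, (mem_filter.1 hb).1, (mem_filter.1 hb).2⟩

lemma sum_image_blockVec_eq_one_iff (C : Finset (Finset V)) (p : V) :
    ∑ s ∈ C.image blockVec, s p = 1 ↔ p ∈ oddSet C := by
  rw [sum_image fun _ _ _ _ h => blockVec_injective h, mem_oddSet,
    ← ZMod.natCast_eq_one_iff_odd]
  simp [blockVec, sum_boole]

lemma IsEvenFree.oddSet_nonempty {r : ℕ} {B : Finset (Finset V)} (h : IsEvenFree r B)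
    (hC : C ⊆ B) (hne : C.Nonempty) (hr : #C ≤ r) : (oddSet C).Nonempty := by
  rw [nonempty_iff_ne_empty, Ne, ← isEvenConfig_iff_oddSet_eq_empty]
  exact h C hC hne hr

end oddSet

namespace IsSteinerTripleSystem

variable {B : Finset (Finset V)} (hB : IsSteinerTripleSystem B)
include hB

lemma card_inter_le_one {b b' : Finset V} (hb : b ∈ B) (hb' : b' ∈ B) (hne : b ≠ b') :
    #(b ∩ b') ≤ 1 := by
  by_contra! h
  obtain ⟨p, hp, hp2⟩ := exists_subset_card_eq h
  exact hne ((hB.existsUnique_superset p hp2).unique ⟨hb, hp.trans inter_subset_left⟩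
    ⟨hb', hp.trans inter_subset_right⟩)

lemma four_le_card_symmDiff {b b' : Finset V} (hb : b ∈ B) (hb' : b' ∈ B) (hne : b ≠ b') :
    4 ≤ #(b ∆ b') := by
  have := card_symmDiff_add_two_mul_card_inter b b'
  have := hB.card_inter_le_one hb hb' hne
  rw [hB.card_eq_three b hb, hB.card_eq_three b' hb'] at *
  omega

lemma card_eq [Fintype V] : #B = Fintype.card V * (Fintype.card V - 1) / 6 := by
  have hcover : powersetCard 2 univ = B.biUnion (powersetCard 2) := by
    ext p
    simp only [mem_powersetCard, mem_biUnion, subset_univ, true_and]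
    refine ⟨fun hp => ?_, fun ⟨_, _, _, hp⟩ => hp⟩
    obtain ⟨b, ⟨hb, hpb⟩, -⟩ := hB.existsUnique_superset p hp
    exact ⟨b, hb, hpb, hp⟩
  have hdisj : (B : Set (Finset V)).PairwiseDisjoint (powersetCard 2) := by
    intro b hb b' hb' hne
    refine disjoint_left.2 fun p hp hp' => hne ?_
    rw [mem_powersetCard] at hp hp'
    exact (hB.existsUnique_superset p hp.2).unique ⟨hb, hp.1⟩ ⟨hb', hp'.1⟩
  have hcount : (Fintype.card V).choose 2 = #B * 3 := by
    rw [← card_univ, ← card_powersetCard, hcover, card_biUnion hdisj]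
    exact sum_const_nat fun b hb => by rw [card_powersetCard, hB.card_eq_three b hb]; rfl
  rw [Nat.choose_two_right] at hcount
  omega

variable [Fintype V] {C : Finset (Finset V)}

lemma four_le_card_oddSet (hC : C ⊆ B) (hC2 : #C = 2) : 4 ≤ #(oddSet C) := by
  obtain ⟨b, b', hne, rfl⟩ := card_eq_two.1 hC2
  rw [oddSet_insert (notMem_singleton.2 hne), oddSet_singleton]
  exact hB.four_le_card_symmDiff (hC (by simp)) (hC (by simp)) hne

lemma not_oddSet_subset (h4 : IsEvenFree 4 B) (hC : C ⊆ B) (hne : C.Nonempty) (hC3 : #C ≤ 3)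
    {a : Finset V} (ha : a ∈ B) (haC : a ∉ C) : ¬ oddSet C ⊆ a := by
  intro hsub
  have ha3 := hB.card_eq_three a ha
  obtain hone | htwo | hthree : #C = 1 ∨ #C = 2 ∨ #C = 3 := by
    have := card_pos.2 hne
    omega
  · obtain ⟨b, rfl⟩ := card_eq_one.1 hone
    rw [oddSet_singleton] at hsub
    have hb3 := hB.card_eq_three b (hC (mem_singleton_self b))
    exact haC (by rw [eq_of_subset_of_card_le hsub (by omega)]; exact mem_singleton_self a)
  · have := card_le_card hsub
    have := hB.four_le_card_oddSet hC htwo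
    omega
  · have hne_a : oddSet C ≠ a := by
      intro hOa
      refine h4 (insert a C) (insert_subset ha hC) (insert_nonempty a C)
        (by rw [card_insert_of_notMem haC]; omega) ?_
      rw [isEvenConfig_iff_oddSet_eq_empty, oddSet_insert haC, hOa, symmDiff_self, bot_eq_empty]
    have hlt : #(oddSet C) < 3 := ha3 ▸ card_lt_card (ssubset_of_subset_of_ne hsub hne_a)
    obtain ⟨p, hp⟩ := h4.oddSet_nonempty hC hne (by omega)
    obtain ⟨b, hbC, hpb⟩ := exists_mem_of_mem_oddSet hp
    -- removing a block through an odd point leaves two blocks with too small a symmetric difference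
    have hrest : oddSet (C.erase b) = b ∆ oddSet C := by
      have h := oddSet_insert (notMem_erase b C)
      rw [insert_erase hbC] at h
      rw [h, symmDiff_symmDiff_cancel_left]
    have h4le := hB.four_le_card_oddSet ((erase_subset b C).trans hC)
      (by rw [card_erase_of_mem hbC]; omega)
    have := card_symmDiff_add_two_mul_card_inter b (oddSet C)
    have := card_pos.2 ⟨p, mem_inter.2 ⟨hpb, hp⟩⟩
    rw [hrest] at h4le
    rw [hB.card_eq_three b (hC hbC)] at *
    omega

end IsSteinerTripleSystem

section XCode

variable [Fintype V] {B : Finset (Finset V)}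

lemma isXCode_image_blockVec {d x : ℕ}
    (h : ∀ A ⊆ B, ∀ C ⊆ B, Disjoint A C → #A ≤ x → C.Nonempty → #C ≤ d →
      ∃ p ∈ oddSet C, ∀ a ∈ A, p ∉ a) :
    IsXCode d x (B.image blockVec) := by
  intro S₁ S₂ hS₁ hS₂ hdisj hx hpos hd
  obtain ⟨A, hA, rfl⟩ := subset_image_iff.1 hS₁
  obtain ⟨C, hC, rfl⟩ := subset_image_iff.1 hS₂
  rw [disjoint_image blockVec_injective] at hdisj
  rw [card_image_of_injective _ blockVec_injective] at hx hpos hd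
  obtain ⟨p, hp, hpA⟩ := h A hA C hC hdisj hx (card_pos.1 hpos) hd
  refine ⟨p, (sum_image_blockVec_eq_one_iff C p).2 hp, ?_⟩
  simpa only [forall_mem_image, blockVec_eq_zero_iff] using hpA

lemma IsEvenFree.isXCode_zero {d : ℕ} (h : IsEvenFree d B) : IsXCode d 0 (B.image blockVec) :=
  isXCode_image_blockVec fun A _ C hC _ hA hne hd => by
    obtain ⟨p, hp⟩ := h.oddSet_nonempty hC hne hd
    exact ⟨p, hp, by simp [card_eq_zero.1 (Nat.le_zero.1 hA)]⟩

lemma IsSteinerTripleSystem.isXCode_three_one (hB : IsSteinerTripleSystem B)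
    (h4 : IsEvenFree 4 B) : IsXCode 3 1 (B.image blockVec) :=
  isXCode_image_blockVec fun A hA C hC hAC hA1 hne hC3 => by
    obtain hA0 | hA1 := Nat.le_one_iff_eq_zero_or_eq_one.1 hA1
    · obtain ⟨p, hp⟩ := h4.oddSet_nonempty hC hne (by omega)
      exact ⟨p, hp, by simp [card_eq_zero.1 hA0]⟩
    · obtain ⟨a, rfl⟩ := card_eq_one.1 hA1
      obtain ⟨p, hp, hpa⟩ := not_subset.1 <| hB.not_oddSet_subset h4 hC hne hC3
        (hA (mem_singleton_self a)) (disjoint_singleton_left.1 hAC)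
      exact ⟨p, hp, by simpa using hpa⟩

end XCode

/-- Lemma 1: the block indicator vectors of a 5-even-free Steiner triple system of
order `v` form a `(v, v(v-1)/6, 3, 1)` X-code of constant weight three which is also
a `(v, v(v-1)/6, 5, 0)` X-code. -/
theorem fiveEvenFree_sts_xcode (v : ℕ) (B : Finset (Finset (Fin v)))
    (hblock : ∀ b ∈ B, b.card = 3)
    (hsts : ∀ p : Finset (Fin v), p.card = 2 → ∃! b, b ∈ B ∧ p ⊆ b)
    (h5 : ∀ C ⊆ B, C.Nonempty → C.card ≤ 5 → ¬ IsEvenConfig C) :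
    (B.image fun b => fun p : Fin v => if p ∈ b then (1 : ZMod 2) else 0).card
        = v * (v - 1) / 6 ∧
      (∀ s ∈ B.image fun b => fun p : Fin v => if p ∈ b then (1 : ZMod 2) else 0,
        wt s = 3) ∧
      IsXCode 3 1 (B.image fun b => fun p : Fin v => if p ∈ b then (1 : ZMod 2) else 0) ∧
      IsXCode 5 0 (B.image fun b => fun p : Fin v => if p ∈ b then (1 : ZMod 2) else 0) := by
  have hB : IsSteinerTripleSystem B := ⟨hblock, hsts⟩
  have hfree : IsEvenFree 5 B := h5
  rw [show (fun b p => if p ∈ b then 1 else 0) = blockVec (V := Fin v) from rfl]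
  refine ⟨?_, ?_, hB.isXCode_three_one (hfree.mono (by norm_num)),
    hfree.isXCode_zero⟩
  · rw [card_image_of_injective B blockVec_injective, hB.card_eq, Fintype.card_fin]
  · simpa only [forall_mem_image, wt_blockVec] using hblock
end

section
/- For every integer v > 3, no Steiner triple system of order v is 8-even-free; that is, every STS(v) with v > 3 contains a nonempty even configuration consisting of at most 8 blocks. -/
/-!
For `x ≠ y` let `x * y` be the third point of the block through `x` and `y`, and `x * x = x`:
this turns the points into a Steiner quasigroup, whose lines are the blocks `{x, y, x * y}`.
Fix a block `{a, b, a * b}` and walk from a point `x` off it alternately along the lines through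
`a` and `b`: `x, a * x, b * (a * x), a * (b * (a * x))`. Closing such walks by the line through
their endpoints produces even configurations, so in an 8-even-free system certain coincidences are
forced. The two-step chord `x ↦ x * (b * (a * x))` is injective, hence a permutation of the points
off `{a, b, a * b}`; a preimage under it closes an 8-block configuration unless the three-step chord
`x * (a * (b * (a * x)))` passes through `a * b`. But if the three-step chords of `x` and of `a * x`
both pass through `a * b`, the two closed walks form an even configuration of six blocks.
-/

open Finset

section EvenConfigurations

variable {V : Type*} [DecidableEq V]

theorem exists_isEvenConfig_of_odd_count (M : Multiset (Finset V))
    (heven : ∀ p, Even (M.countP (p ∈ ·))) {T : Finset V} (hT : Odd (M.count T)) :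
    ∃ C ⊆ M.toFinset, C.Nonempty ∧ #C ≤ M.card ∧ IsEvenConfig C := by
  refine ⟨M.toFinset.filter (Odd <| M.count ·), filter_subset _ _,
    ⟨T, mem_filter.2 ⟨Multiset.mem_toFinset.2 (Multiset.count_pos.1 hT.pos), hT⟩⟩,
    (card_filter_le _ _).trans (Multiset.toFinset_card_le M), fun p => ?_⟩
  have hcount (T : Finset V) : (if Odd (M.count T) then 1 else 0 : ZMod 2) = M.count T := by
    split_ifs with h
    · exact (ZMod.natCast_eq_one_iff_odd.2 h).symm
    · exact (ZMod.natCast_eq_zero_iff_even.2 (Nat.not_odd_iff_even.1 h)).symm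
  rw [← ZMod.natCast_eq_zero_iff_even, filter_comm, natCast_card_filter]
  simp_rw [hcount]
  rw [← Nat.cast_sum, ZMod.natCast_eq_zero_iff_even]
  convert heven p using 1
  rw [Multiset.countP_eq_card_filter, ← Multiset.toFinset_sum_count_eq, Multiset.toFinset_filter]
  exact sum_congr rfl fun T hT =>
    (Multiset.count_filter_of_pos (p := (p ∈ ·)) (mem_filter.1 hT).2).symm

theorem List.countP_mem_eq_count_sum_val (L : List (Finset V)) (z : V) :
    L.countP (z ∈ ·) = (L.map Finset.val).sum.count z := by
  induction L with
  | nil => simp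
  | cons T L ih =>
    simp [List.countP_cons, Multiset.count_add, ih, Multiset.count_eq_of_nodup T.nodup, add_comm]

end EvenConfigurations

class SteinerQuasigroup (V : Type*) extends CommMagma V where
  mul_self : ∀ x : V, x * x = x
  mul_mul_cancel_left : ∀ x y : V, x * (x * y) = y

namespace SteinerQuasigroup

attribute [grind =] mul_self mul_mul_cancel_left mul_comm

variable {V : Type*} [SteinerQuasigroup V]

@[grind =] lemma mul_right_inj (x : V) {y z : V} : x * y = x * z ↔ y = z :=
  ⟨fun h => by rw [← mul_mul_cancel_left x y, h, mul_mul_cancel_left], congrArg _⟩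

lemma mul_left_inj (x : V) {y z : V} : y * x = z * x ↔ y = z := by
  rw [mul_comm y, mul_comm z, mul_right_inj]

@[grind →] lemma eq_of_mul_eq_left {x y : V} (h : x * y = x) : y = x := by
  rw [← mul_mul_cancel_left x y, h, mul_self]

@[grind .] lemma mul_mul_ne_self {a b : V} (hab : a ≠ b) (x : V) : b * (a * x) ≠ x := by
  intro h
  have h' := congrArg (b * ·) h
  simp only [mul_mul_cancel_left] at h'
  exact hab ((mul_left_inj x).1 h')

variable [DecidableEq V]

def block (p : V × V) : Finset V := {p.1, p.2, p.1 * p.2}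

@[simp, grind =] lemma mem_block {z : V} {p : V × V} :
    z ∈ block p ↔ z = p.1 ∨ z = p.2 ∨ z = p.1 * p.2 := by
  simp [block]

lemma block_val {p : V × V} (h : p.1 ≠ p.2) :
    (block p).val = {p.1} + {p.2} + {p.1 * p.2} := by
  rw [block, insert_val_of_notMem (by grind), insert_val_of_notMem (by grind)]
  simp [Multiset.singleton_add]

lemma block_eq_block_iff {p q : V × V} (hq : q.1 ≠ q.2) :
    block p = block q ↔ q.1 ∈ block p ∧ q.2 ∈ block p := by
  refine ⟨fun h => by simp [h], fun ⟨h1, h2⟩ => ?_⟩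
  ext z
  simp only [mem_block] at h1 h2 ⊢
  grind

/-- Blocks are listed by pairs of distinct points, so a list of pairs is a multiset of blocks. -/
def IsEvenFree (V : Type*) [SteinerQuasigroup V] [DecidableEq V] (r : ℕ) : Prop :=
  ∀ L : List (V × V), (∀ p ∈ L, p.1 ≠ p.2) → L.length ≤ r →
    (∀ z, Even ((L.map block).countP (z ∈ ·))) → ∀ T, Even ((L.map block).count T)

theorem IsEvenFree.mono {r s : ℕ} (h : IsEvenFree V s) (hrs : r ≤ s) : IsEvenFree V r :=
  fun L hL hlen => h L hL (hlen.trans hrs)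

/-- The working form of even-freeness: `N + N` certifies that every point is covered an even
number of times, and the block through `q.1, q.2` occurs as often as that pair is covered. -/
theorem IsEvenFree.countP_ne_one {r : ℕ} (h : IsEvenFree V r) {L : List (V × V)}
    (hL : ∀ p ∈ L, p.1 ≠ p.2) (hlen : L.length ≤ r) (N : Multiset V)
    (hN : (L.map fun p => ({p.1} + {p.2} + {p.1 * p.2} : Multiset V)).sum = N + N)
    (q : V × V) (hq : q.1 ≠ q.2) :
    (L.map block).countP (fun T => q.1 ∈ T ∧ q.2 ∈ T) ≠ 1 := by
  have heven (z : V) : Even ((L.map block).countP (z ∈ ·)) := by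
    rw [List.countP_mem_eq_count_sum_val, List.map_map,
      List.map_congr_left (f := Finset.val ∘ block) fun p hp => block_val (hL p hp), hN,
      Multiset.count_add]
    exact ⟨_, rfl⟩
  have hcount : (L.map block).count (block q) =
      (L.map block).countP (fun T => q.1 ∈ T ∧ q.2 ∈ T) := by
    rw [List.count_eq_countP]
    refine List.countP_congr fun T hT => ?_
    obtain ⟨p, -, rfl⟩ := List.mem_map.1 hT
    simp [block_eq_block_iff hq]
  rw [← hcount]
  exact fun h1 => Nat.not_even_one (h1 ▸ h L hL hlen heven (block q))

theorem exists_isEvenConfig_of_not_isEvenFree {B : Finset (Finset V)} {r : ℕ}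
    (hB : ∀ p : V × V, p.1 ≠ p.2 → block p ∈ B) (h : ¬ IsEvenFree V r) :
    ∃ C ⊆ B, C.Nonempty ∧ #C ≤ r ∧ IsEvenConfig C := by
  simp only [IsEvenFree, not_forall, Nat.not_even_iff_odd] at h
  obtain ⟨L, hL, hlen, heven, T, hT⟩ := h
  obtain ⟨C, hCM, hC, hcard, hCeven⟩ :=
    exists_isEvenConfig_of_odd_count (L.map block : Multiset (Finset V)) (by simpa using heven)
      (T := T) (by simpa using hT)
  refine ⟨C, fun T hT => ?_, hC, hcard.trans (by simpa using hlen), hCeven⟩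
  obtain ⟨p, hp, rfl⟩ := List.mem_map.1 (Multiset.mem_coe.1 (Multiset.mem_toFinset.1 (hCM hT)))
  exact hB p (hL p hp)

def chord₂ (a b x : V) : V := x * (b * (a * x))

def chord₃ (a b x : V) : V := x * (a * (b * (a * x)))

variable {a b x y : V}

/-- Equality would make the four lines of the walk `x, a * x, b * (a * x), a * (b * (a * x))`
and the line through `b` and `x` a Pasch configuration. -/
theorem IsEvenFree.mul_mul_mul_ne_mul (h : IsEvenFree V 4) (hab : a ≠ b)
    (hx : x ∉ block (a, b)) : a * (b * (a * x)) ≠ b * x := by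
  intro hP
  refine h.countP_ne_one (L := [(a, x), (b, a * x), (a, b * (a * x)), (b, x)])
    (by simp; grind) (by simp) ({a} + {b} + {x} + {a * x} + {b * (a * x)} + {b * x})
    ?_ (a, x) (by grind) (by simp; grind)
  simp only [List.map_cons, List.map_nil, List.sum_cons, List.sum_nil]
  rw [hP]
  abel

/-- Equality would make the closed two-step walk of `x` together with `{a, b, a * b}` a Pasch
configuration. -/
theorem IsEvenFree.chord₂_ne (h : IsEvenFree V 4) (hab : a ≠ b) (hx : x ∉ block (a, b)) :
    chord₂ a b x ≠ a * b := by
  intro hE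
  refine h.countP_ne_one (L := [(a, x), (b, a * x), (x, b * (a * x)), (a, b)])
    (by simp; grind) (by simp) ({a} + {b} + {x} + {a * x} + {b * (a * x)} + {a * b})
    ?_ (a, b) hab (by simp; grind [chord₂])
  simp only [List.map_cons, List.map_nil, List.sum_cons, List.sum_nil]
  rw [← chord₂, hE]
  abel

theorem IsEvenFree.chord₂_notMem (h : IsEvenFree V 4) (hab : a ≠ b) (hx : x ∉ block (a, b)) :
    chord₂ a b x ∉ block (a, b) := by
  have := h.chord₂_ne hab hx
  simp only [mem_block] at *
  grind [chord₂]

theorem IsEvenFree.chord₂_injOn (h : IsEvenFree V 6) (hab : a ≠ b) :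
    Set.InjOn (chord₂ a b) {x | x ∉ block (a, b)} := by
  intro x hx y hy hE
  by_contra hxy
  have hEx := (h.mono (by norm_num)).chord₂_notMem hab hx
  simp only [Set.mem_ofPred_eq, chord₂] at hx hy hE hEx
  -- the closed two-step walks of `x` and `y` end on the same chord point
  have key := h.countP_ne_one (L := [(a, x), (b, a * x), (x, b * (a * x)), (a, y), (b, a * y),
      (y, b * (a * y))]) (by simp; grind) (by simp)
    ({a} + {b} + {x} + {a * x} + {b * (a * x)} + {y} + {a * y} + {b * (a * y)} +
      {x * (b * (a * x))}) ?_
  · by_cases hy' : y = a * x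
    · exact key (b, a * x) (by grind) (by simp; grind)
    · exact key (a, x) (by grind) (by simp; grind)
  · simp only [List.map_cons, List.map_nil, List.sum_cons, List.sum_nil]
    rw [hE]
    abel

theorem IsEvenFree.exists_chord₂_eq [Finite V] (h : IsEvenFree V 6) (hab : a ≠ b)
    (hy : y ∉ block (a, b)) : ∃ z ∉ block (a, b), chord₂ a b z = y := by
  have hmaps : Set.MapsTo (chord₂ a b) {x | x ∉ block (a, b)} {x | x ∉ block (a, b)} :=
    fun x hx => (h.mono (by norm_num)).chord₂_notMem hab hx
  exact ((Set.toFinite _).injOn_iff_bijOn_of_mapsTo hmaps).1 (h.chord₂_injOn hab) |>.surjOn hy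

theorem IsEvenFree.chord₃_eq [Finite V] (h : IsEvenFree V 8) (hab : a ≠ b)
    (hx : x ∉ block (a, b)) : chord₃ a b x = a * b := by
  by_contra hD
  have h4 : IsEvenFree V 4 := h.mono (by norm_num)
  have hP := h4.mul_mul_mul_ne_mul hab hx
  have hDab : chord₃ a b x ∉ block (a, b) := by
    simp only [mem_block, chord₃] at hx hD ⊢
    grind
  obtain ⟨z, hz, hzy⟩ := (h.mono (by norm_num)).exists_chord₂_eq hab (y := a * chord₃ a b x)
    (by simp only [mem_block] at hDab ⊢; grind)
  have hEz := h4.chord₂_notMem hab hz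
  simp only [mem_block, chord₃, chord₂] at hx hz hD hDab hzy hEz
  -- with `D = x * (a * (b * (a * x)))`: the closed three-step walk of `x`, the closed two-step
  -- walk of `z` (whose chord point is `a * D`), and the line `{a, D, a * D}`
  have key := h.countP_ne_one (L := [(a, x), (b, a * x), (a, b * (a * x)),
      (x, a * (b * (a * x))), (a, z), (b, a * z), (z, b * (a * z)), (a, x * (a * (b * (a * x))))])
    (by simp; grind) (by simp)
    ({a} + {a} + {x} + {a * x} + {b} + {b * (a * x)} + {a * (b * (a * x))} +
      {x * (a * (b * (a * x)))} + {z} + {a * z} + {b * (a * z)} +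
      {a * (x * (a * (b * (a * x))))}) ?_
  · by_cases hzx : z = x ∨ z = a * (b * (a * x))
    · exact key (x, a * (b * (a * x))) (by grind) (by simp; grind (ematch := 10) (gen := 10))
    · exact key (b, a * x) (by grind) (by simp; grind (ematch := 10) (gen := 10))
  · simp only [List.map_cons, List.map_nil, List.sum_cons, List.sum_nil]
    rw [hzy]
    abel

theorem IsEvenFree.chord₃_mul_ne (h : IsEvenFree V 6) (hab : a ≠ b) (hx : x ∉ block (a, b))
    (hc : chord₃ a b x = a * b) : chord₃ a b (a * x) ≠ a * b := by
  intro hc'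
  simp only [mem_block, chord₃, mul_mul_cancel_left] at hx hc hc'
  -- the closed three-step walks of `x` and `a * x`; their common first line `{a, x, a * x}` cancels
  refine h.countP_ne_one (L := [(b, a * x), (a, b * (a * x)), (x, a * (b * (a * x))), (b, x),
      (a, b * x), (a * x, a * (b * x))]) (by simp; grind) (by simp)
    ({b} + {a * x} + {b * (a * x)} + {a} + {a * (b * (a * x))} + {x} + {b * x} + {a * (b * x)} +
      {a * b}) ?_ (b, a * x) (by grind) (by simp; grind)
  simp only [List.map_cons, List.map_nil, List.sum_cons, List.sum_nil]
  rw [hc, hc']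
  abel

theorem not_isEvenFree_eight [Fintype V] (hV : 3 < Fintype.card V) : ¬ IsEvenFree V 8 := by
  intro h
  obtain ⟨a, b, hab⟩ := Fintype.exists_pair_of_one_lt_card (α := V) (by omega)
  obtain ⟨x, -, hx⟩ := exists_mem_notMem_of_card_lt_card (s := block (a, b)) (t := univ)
    (by rw [card_univ]; exact card_le_three.trans_lt hV)
  have hax : a * x ∉ block (a, b) := by simp only [mem_block] at hx ⊢; grind
  exact (h.mono (by norm_num)).chord₃_mul_ne hab hx (h.chord₃_eq hab hx) (h.chord₃_eq hab hax)

end SteinerQuasigroup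

section SteinerTripleSystem

variable {V : Type*} [DecidableEq V] {B : Finset (Finset V)}

theorem exists_third_point (hblock : ∀ b ∈ B, #b = 3)
    (hsts : ∀ p : Finset V, #p = 2 → ∃! b, b ∈ B ∧ p ⊆ b) {x y : V} (hxy : x ≠ y) :
    ∃ z, z ≠ x ∧ z ≠ y ∧ {x, y, z} ∈ B := by
  obtain ⟨T, ⟨hT, hxyT⟩, -⟩ := hsts {x, y} (card_pair hxy)
  obtain ⟨z, hz⟩ := card_eq_one.1 <| show #(T \ {x, y}) = 1 by
    rw [card_sdiff_of_subset hxyT, hblock T hT, card_pair hxy]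
  have hT' : T = {x, y, z} := by
    rw [← sdiff_union_of_subset hxyT, hz]
    ext u
    simp only [mem_union, mem_insert, mem_singleton]
    tauto
  have hzT : z ∈ T \ {x, y} := by rw [hz]; exact mem_singleton_self z
  simp only [mem_sdiff, mem_insert, mem_singleton, not_or] at hzT
  exact ⟨z, hzT.2.1, hzT.2.2, hT' ▸ hT⟩

theorem third_point_unique (hsts : ∀ p : Finset V, #p = 2 → ∃! b, b ∈ B ∧ p ⊆ b)
    {x y z w : V} (hxy : x ≠ y) (hz : z ≠ x ∧ z ≠ y ∧ {x, y, z} ∈ B)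
    (hw : w ≠ x ∧ w ≠ y ∧ {x, y, w} ∈ B) : z = w := by
  have h := (hsts {x, y} (card_pair hxy)).unique ⟨hz.2.2, by intro u; simp; tauto⟩
    ⟨hw.2.2, by intro u; simp; tauto⟩
  have : z ∈ ({x, y, w} : Finset V) := h ▸ by simp
  simp only [mem_insert, mem_singleton] at this
  tauto

theorem exists_steinerQuasigroup (hblock : ∀ b ∈ B, #b = 3)
    (hsts : ∀ p : Finset V, #p = 2 → ∃! b, b ∈ B ∧ p ⊆ b) :
    ∃ _ : SteinerQuasigroup V,
      ∀ p : V × V, p.1 ≠ p.2 → SteinerQuasigroup.block p ∈ B := by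
  let t (x y : V) : V := if h : x = y then x else (exists_third_point hblock hsts h).choose
  have ht {x y : V} (hxy : x ≠ y) : t x y ≠ x ∧ t x y ≠ y ∧ {x, y, t x y} ∈ B := by
    simp only [t, dif_neg hxy]
    exact (exists_third_point hblock hsts hxy).choose_spec
  have ht_unique {x y z : V} (hxy : x ≠ y) (hz : z ≠ x ∧ z ≠ y ∧ {x, y, z} ∈ B) :
      t x y = z :=
    third_point_unique hsts hxy (ht hxy) hz
  refine ⟨{ mul := t, mul_self := fun _ => dif_pos rfl, mul_comm := ?_,
            mul_mul_cancel_left := ?_ }, fun p hp => (ht hp).2.2⟩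
  · intro x y
    by_cases hxy : x = y
    · rw [hxy]
    · obtain ⟨h1, h2, h3⟩ := ht (Ne.symm hxy)
      exact ht_unique hxy ⟨h2, h1, by rwa [insert_comm]⟩
  · intro x y
    by_cases hxy : x = y
    · subst hxy
      show t x (t x x) = x
      simp [t]
    · obtain ⟨h1, h2, h3⟩ := ht hxy
      exact ht_unique (Ne.symm h1) ⟨Ne.symm hxy, Ne.symm h2, by
        show {x, t x y, y} ∈ B
        rwa [pair_comm]⟩

end SteinerTripleSystem

/-- Theorem: for `v > 3`, no Steiner triple system of order `v` is 8-even-free;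
every `STS(v)` contains a nonempty even configuration of at most 8 blocks. -/
theorem no_eight_even_free_sts (v : ℕ) (hv : 3 < v) (B : Finset (Finset (Fin v)))
    (hblock : ∀ b ∈ B, b.card = 3)
    (hsts : ∀ p : Finset (Fin v), p.card = 2 → ∃! b, b ∈ B ∧ p ⊆ b) :
    ∃ C ⊆ B, C.Nonempty ∧ C.card ≤ 8 ∧ IsEvenConfig C := by
  obtain ⟨_, hB⟩ := exists_steinerQuasigroup hblock hsts
  exact SteinerQuasigroup.exists_isEvenConfig_of_not_isEvenFree hB
    (SteinerQuasigroup.not_isEvenFree_eight (by simpa using hv))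
end

section
/- There exist a real constant c > 0 and an integer v₀ such that for every integer v ≥ v₀ there exists a 6-even-free triple packing (V,ℬ) of order v with at least c·v^{9/5} blocks. -/
open Finset

variable {α β ι : Type*}

theorem IsEvenConfig.two_mul_card_biUnion_le [DecidableEq α] {C : Finset (Finset α)}
    (hC : IsEvenConfig C) : 2 * #(C.biUnion id) ≤ ∑ b ∈ C, #b := by
  have hcover : ∀ p ∈ C.biUnion id, 2 ≤ #{b ∈ C | p ∈ b} := by
    intro p hp
    obtain ⟨b, hb, hpb⟩ := mem_biUnion.1 hp
    have hpos : 0 < #{b ∈ C | p ∈ b} := card_pos.2 ⟨b, mem_filter.2 ⟨hb, hpb⟩⟩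
    obtain ⟨k, hk⟩ := hC p
    omega
  calc 2 * #(C.biUnion id) = #(C.biUnion id) * 2 := mul_comm _ _
    _ ≤ ∑ b ∈ C, #(C.biUnion id ∩ b) := le_sum_card_inter hcover
    _ = ∑ b ∈ C, #b := sum_congr rfl fun b hb =>
        congrArg card (inter_eq_right.2 (subset_biUnion_of_mem id hb))

theorem exists_subset_forall_not_subset [DecidableEq α] (B : Finset α) (F : Finset (Finset α))
    (hF : ∀ C ∈ F, C.Nonempty) :
    ∃ B' ⊆ B, (∀ C ∈ F, ¬ C ⊆ B') ∧ #B ≤ #B' + #{C ∈ F | C ⊆ B} := by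
  induction F using Finset.induction_on with
  | empty => exact ⟨B, subset_rfl, by simp, by simp⟩
  | insert C F hCF ih =>
    obtain ⟨B', hB'B, hfree, hcard⟩ := ih fun D hD => hF D (mem_insert_of_mem hD)
    by_cases hCB' : C ⊆ B'
    · obtain ⟨x, hx⟩ := hF C (mem_insert_self C F)
      refine ⟨B'.erase x, (erase_subset x B').trans hB'B, ?_, ?_⟩
      · simp only [mem_insert, forall_eq_or_imp]
        exact ⟨fun h => notMem_erase x B' (h hx),
          fun D hD h => hfree D hD (h.trans (erase_subset x B'))⟩
      · rw [filter_insert, if_pos (hCB'.trans hB'B), card_insert_of_notMem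
          (fun h => hCF (mem_filter.1 h).1), card_erase_of_mem (hCB' hx)]
        have : 0 < #B' := card_pos.2 ⟨x, hCB' hx⟩
        omega
    · refine ⟨B', hB'B, ?_, hcard.trans (Nat.add_le_add_left (card_le_card ?_) _)⟩
      · simp only [mem_insert, forall_eq_or_imp]
        exact ⟨hCB', hfree⟩
      · exact filter_subset_filter _ (subset_insert C F)

theorem exists_fin_range_superset [Nonempty α] (U : Finset α) {s : ℕ} (hU : #U ≤ s) :
    ∃ P : Fin s → α, ↑U ⊆ Set.range P := by
  refine ⟨Function.extend (Fin.castLE hU) (fun i => (U.equivFin.symm i : α))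
    (fun _ => Classical.arbitrary α), fun u hu => ⟨Fin.castLE hU (U.equivFin ⟨u, hu⟩), ?_⟩⟩
  rw [(Fin.castLE_injective hU).extend_apply, Equiv.symm_apply_apply]

def sparseConfigs (α : Type*) [Fintype α] [DecidableEq α] (j s : ℕ) :
    Finset (Finset (Finset α)) :=
  {C | #C = j ∧ #(C.biUnion id) ≤ s}

/-- A configuration is encoded by a list `P` of `s` points covering it together with the
index sets of its blocks. -/
theorem card_sparseConfigs_le [Fintype α] [DecidableEq α] [Nonempty α] (j s : ℕ) :
    #(sparseConfigs α j s) ≤ Fintype.card α ^ s * (2 ^ s) ^ j := by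
  let decode : (Fin s → α) × Finset (Finset (Fin s)) → Finset (Finset α) :=
    fun w => w.2.image (image w.1)
  have hsub : sparseConfigs α j s ⊆ (univ ×ˢ powersetCard j univ).image decode := by
    intro C hC
    obtain ⟨hCj, hCs⟩ := mem_filter.1 hC |>.2
    obtain ⟨P, hP⟩ := exists_fin_range_superset (C.biUnion id) hCs
    let index : Finset α → Finset (Fin s) := fun b => {i | P i ∈ b}
    have hinv : ∀ b ∈ C, (index b).image P = b := by
      intro b hb
      ext x
      simp only [index, mem_image, mem_filter, mem_univ, true_and]
      refine ⟨fun ⟨i, hi, hix⟩ => hix ▸ hi, fun hx => ?_⟩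
      obtain ⟨i, hi⟩ := hP (mem_biUnion.2 ⟨b, hb, hx⟩)
      exact ⟨i, hi ▸ hx, hi⟩
    have hinj : Set.InjOn index C := fun b hb b' hb' h => by
      rw [← hinv b hb, ← hinv b' hb', h]
    refine mem_image.2 ⟨(P, C.image index), ?_, ?_⟩
    · simp only [mem_product, mem_univ, true_and, mem_powersetCard_univ]
      rw [card_image_of_injOn hinj, hCj]
    · simp only [decode, image_image]
      exact (image_congr (g := id) hinv).trans image_id
  calc #(sparseConfigs α j s)
      ≤ #((univ ×ˢ powersetCard j univ).image decode) := card_le_card hsub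
    _ ≤ #(univ ×ˢ powersetCard j (univ : Finset (Finset (Fin s)))) := card_image_le
    _ = Fintype.card α ^ s * (2 ^ s).choose j := by
      simp [card_product, card_powersetCard]
    _ ≤ Fintype.card α ^ s * (2 ^ s) ^ j := Nat.mul_le_mul_left _ (Nat.choose_le_pow _ _)

section RandomFunctions

variable [Fintype α] [Fintype ι] [DecidableEq ι] [DecidableEq β]

theorem card_filter_forall_apply_eq_mul_le (e : α ↪ β) {S : Finset β} (σ : S → ι) :
    #{f : ι → α | ∀ b : S, e (f (σ b)) = b} * Fintype.card α ^ #S ≤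
      Fintype.card α ^ Fintype.card ι := by
  set Q := ({f : ι → α | ∀ b : S, e (f (σ b)) = b} : Finset (ι → α))
  by_cases hσ : Function.Injective σ
  · have hinj : Set.InjOn (fun p : (ι → α) × (S → α) => Function.extend σ p.2 p.1)
        ↑(Q ×ˢ (univ : Finset (S → α))) := by
      rintro ⟨f, g⟩ hfg ⟨f', g'⟩ hfg' h
      simp only [Q, coe_product, coe_filter, coe_univ, Set.mem_prod, Set.mem_ofPred_eq,
        mem_univ, true_and, Set.mem_univ, and_true] at hfg hfg' h
      have hg : g = g' := funext fun b => by
        simpa only [hσ.extend_apply] using congrFun h (σ b)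
      refine Prod.ext (funext fun i => ?_) hg
      by_cases hi : ∃ b, σ b = i
      · obtain ⟨b, rfl⟩ := hi
        exact e.injective ((hfg b).trans (hfg' b).symm)
      · simpa only [Function.extend_apply' _ _ _ hi] using congrFun h i
    simpa [card_product] using card_le_card_of_injOn _ (fun _ _ => mem_univ _) hinj
  · obtain ⟨b, b', hbb', hne⟩ := Function.not_injective_iff.1 hσ
    have hQ : Q = ∅ := eq_empty_of_forall_notMem fun f hf => by
      obtain hf := (mem_filter.1 hf).2
      exact hne (Subtype.ext ((hf b).symm.trans (hbb' ▸ hf b')))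
    simp [hQ]

/-- Union bound over the positions `σ : S → ι` at which the elements of `S` are picked. -/
theorem card_filter_subset_image_mul_le [DecidableEq α] (e : α ↪ β) (S : Finset β) :
    #{f : ι → α | S ⊆ univ.image (e ∘ f)} * Fintype.card α ^ #S ≤
      Fintype.card ι ^ #S * Fintype.card α ^ Fintype.card ι := by
  have hcover : ({f : ι → α | S ⊆ univ.image (e ∘ f)} : Finset (ι → α)) ⊆
      univ.biUnion fun σ : S → ι => {f | ∀ b : S, e (f (σ b)) = b} := by
    intro f hf
    have hf : ∀ b : S, ∃ i, e (f i) = b := fun b => by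
      simpa using (mem_filter.1 hf).2 b.2
    choose σ hσ using hf
    exact mem_biUnion.2 ⟨σ, mem_univ _, mem_filter.2 ⟨mem_univ _, hσ⟩⟩
  calc _ ≤ (∑ σ : S → ι, #{f : ι → α | ∀ b : S, e (f (σ b)) = b}) * Fintype.card α ^ #S :=
        Nat.mul_le_mul_right _ ((card_le_card hcover).trans card_biUnion_le)
    _ ≤ ∑ _σ : S → ι, Fintype.card α ^ Fintype.card ι := by
        rw [sum_mul]
        exact sum_le_sum fun σ _ => card_filter_forall_apply_eq_mul_le e σ
    _ = _ := by simp

theorem card_filter_apply_eq_apply_mul_le [DecidableEq α] {i i' : ι} (h : i ≠ i') :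
    #{f : ι → α | f i = f i'} * Fintype.card α ≤ Fintype.card α ^ Fintype.card ι := by
  have hinj : Set.InjOn (fun p : (ι → α) × α => Function.update p.1 i p.2)
      ↑(({f : ι → α | f i = f i'} : Finset (ι → α)) ×ˢ (univ : Finset α)) := by
    rintro ⟨f, a⟩ hf ⟨f', a'⟩ hf' hupd
    simp only [coe_product, coe_filter, coe_univ, Set.mem_prod, Set.mem_ofPred_eq, mem_univ,
      true_and, Set.mem_univ, and_true] at hf hf' hupd
    have hi' : f i' = f' i' := by
      simpa only [Function.update_of_ne h.symm] using congrFun hupd i'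
    refine Prod.ext (funext fun k => ?_) (by simpa using congrFun hupd i)
    by_cases hk : k = i
    · exact hk ▸ hf.trans (hi'.trans hf'.symm)
    · simpa only [Function.update_of_ne hk] using congrFun hupd k
  simpa [card_product] using card_le_card_of_injOn _ (fun _ _ => mem_univ _) hinj

theorem card_le_card_image_add_card_filter (g : ι → β) :
    Fintype.card ι ≤ #(univ.image g) + #{p : ι × ι | p.1 ≠ p.2 ∧ g p.1 = g p.2} := by
  set D := ({p : ι × ι | p.1 ≠ p.2 ∧ g p.1 = g p.2} : Finset (ι × ι)).image Prod.fst
  have hinj : Set.InjOn g ↑(univ \ D) := fun i hi i' _ h => by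
    by_contra hne
    exact (mem_sdiff.1 hi).2 (mem_image.2 ⟨(i, i'), by simp [hne, h], rfl⟩)
  calc Fintype.card ι = #(univ \ D) + #D :=
        (card_sdiff_add_card_eq_card (subset_univ D)).symm
    _ ≤ #(univ.image g) + #D :=
        Nat.add_le_add_right ((card_image_of_injOn hinj).symm.le.trans
          (card_le_card (image_subset_image (subset_univ _)))) _
    _ ≤ _ := Nat.add_le_add_left card_image_le _

theorem sum_card_sub_card_image_mul_le [DecidableEq α] (e : α ↪ β) :
    (∑ f : ι → α, (Fintype.card ι - #(univ.image (e ∘ f)))) * Fintype.card α ≤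
      Fintype.card ι ^ 2 * Fintype.card α ^ Fintype.card ι := by
  set P := ({p : ι × ι | p.1 ≠ p.2} : Finset (ι × ι)) with hP
  have hcoll : ∀ f : ι → α, Fintype.card ι - #(univ.image (e ∘ f)) ≤
      #{p ∈ P | f p.1 = f p.2} := fun f => by
    have := card_le_card_image_add_card_filter (e ∘ f)
    simp only [Function.comp_apply, e.injective.eq_iff, ← filter_filter, ← hP] at this
    omega
  calc _ ≤ (∑ f : ι → α, #{p ∈ P | f p.1 = f p.2}) * Fintype.card α :=
        Nat.mul_le_mul_right _ (sum_le_sum fun f _ => hcoll f)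
    _ = ∑ p ∈ P, #{f : ι → α | f p.1 = f p.2} * Fintype.card α := by
        rw [← sum_mul]
        congr 1
        exact sum_card_bipartiteAbove_eq_sum_card_bipartiteBelow _
    _ ≤ ∑ _p ∈ P, Fintype.card α ^ Fintype.card ι :=
        sum_le_sum fun p hp => card_filter_apply_eq_apply_mul_le (mem_filter.1 hp).2
    _ ≤ Fintype.card ι ^ 2 * Fintype.card α ^ Fintype.card ι := by
        rw [sum_const, smul_eq_mul]
        exact Nat.mul_le_mul_right _ ((card_le_univ P).trans (by simp [sq]))

end RandomFunctions

theorem exists_subset_range_forall_not_subset [Fintype α] [Nonempty α] [DecidableEq α]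
    [Fintype ι] [DecidableEq ι] [DecidableEq β] (e : α ↪ β) (F : Finset (Finset β))
    (hF : ∀ C ∈ F, C.Nonempty) :
    ∃ B : Finset β, ↑B ⊆ Set.range e ∧ (∀ C ∈ F, ¬ C ⊆ B) ∧
      (Fintype.card ι : ℝ) - ((Fintype.card ι : ℝ) ^ 2 / Fintype.card α +
        ∑ C ∈ F, (Fintype.card ι : ℝ) ^ #C / (Fintype.card α : ℝ) ^ #C) ≤ #B := by
  set T := Fintype.card ι
  set N := Fintype.card α
  have hN : (0 : ℝ) < N := by exact_mod_cast Fintype.card_pos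
  let blocks : (ι → α) → Finset β := fun f => univ.image (e ∘ f)
  have hcoll : ∑ f : ι → α, ((T - #(blocks f) : ℕ) : ℝ) ≤ N ^ T * (T ^ 2 / N) := by
    rw [mul_div_assoc', le_div_iff₀ hN, mul_comm ((N : ℝ) ^ T), ← Nat.cast_sum]
    exact_mod_cast sum_card_sub_card_image_mul_le (ι := ι) e
  have hforb : ∑ f : ι → α, (#{C ∈ F | C ⊆ blocks f} : ℝ) ≤
      N ^ T * ∑ C ∈ F, (T : ℝ) ^ #C / (N : ℝ) ^ #C := by
    have hswap : ∑ f : ι → α, #{C ∈ F | C ⊆ blocks f} = ∑ C ∈ F, #{f | C ⊆ blocks f} :=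
      sum_card_bipartiteAbove_eq_sum_card_bipartiteBelow _
    rw [← Nat.cast_sum, hswap, Nat.cast_sum, mul_sum]
    refine sum_le_sum fun C _ => ?_
    rw [mul_div_assoc', le_div_iff₀ (pow_pos hN _), mul_comm ((N : ℝ) ^ T)]
    exact_mod_cast card_filter_subset_image_mul_le e C
  obtain ⟨f, -, hf⟩ := exists_le_of_sum_le (univ_nonempty (α := ι → α))
    (f := fun f => ((T - #(blocks f) : ℕ) : ℝ) + #{C ∈ F | C ⊆ blocks f})
    (g := fun _ => (T : ℝ) ^ 2 / N + ∑ C ∈ F, (T : ℝ) ^ #C / (N : ℝ) ^ #C) <| by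
      rw [sum_add_distrib, sum_const, card_univ, Fintype.card_fun, nsmul_eq_mul, mul_add]
      push_cast
      exact add_le_add hcoll hforb
  obtain ⟨B, hB, hfree, hcard⟩ := exists_subset_forall_not_subset (blocks f) F hF
  refine ⟨B, fun b hb => ?_, hfree, ?_⟩
  · obtain ⟨i, -, hi⟩ := mem_image.1 (hB hb)
    exact ⟨f i, hi⟩
  · have : T ≤ #B + (T - #(blocks f)) + #{C ∈ F | C ⊆ blocks f} := by omega
    have : (T : ℝ) ≤ #B + ((T - #(blocks f) : ℕ) : ℝ) + #{C ∈ F | C ⊆ blocks f} := by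
      exact_mod_cast this
    linarith

theorem cube_div_le_choose_three {v : ℕ} (hv : 4 ≤ v) : (v : ℝ) ^ 3 / 48 ≤ v.choose 3 := by
  have h : ((v : ℝ) - 2) ^ 3 / 6 ≤ v.choose 3 := by
    simpa [Nat.cast_sub (by omega : 2 ≤ v), Nat.factorial] using
      Nat.pow_le_choose (α := ℝ) 3 v
  have hv' : (4 : ℝ) ≤ v := by exact_mod_cast hv
  calc (v : ℝ) ^ 3 / 48 = ((v : ℝ) / 2) ^ 3 / 6 := by ring
    _ ≤ ((v : ℝ) - 2) ^ 3 / 6 := by gcongr; linarith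
    _ ≤ v.choose 3 := h

/-- With `v = y ^ 5`, `T ≈ y ^ 9` and `N ≈ y ^ 15`, the left side is about `y ^ (5s - 6j)`,
hence `hs`. It is tight for six triples on nine points, which is what forces the exponent `9/5`.
-/
theorem pow_mul_pow_mul_pow_div_pow_le {y T N : ℝ} {j s : ℕ} (hy : 2 ^ 24 ≤ y) (hT0 : 0 ≤ T)
    (hT : T ≤ y ^ 9 / 2 ^ 21) (hN : y ^ 15 / 48 ≤ N) (hj : 1 ≤ j) (hs : 5 * s ≤ 6 * j + 9)
    (hc : 32 * (2 ^ s) ^ j * 48 ^ j ≤ 2 ^ (21 * (j - 1) + 24 * (6 * j + 9 - 5 * s))) :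
    (y ^ 5) ^ s * (2 ^ s) ^ j * T ^ j / N ^ j ≤ T / 32 := by
  obtain ⟨k, rfl⟩ : ∃ k, j = k + 1 := ⟨j - 1, by omega⟩
  set e := 6 * (k + 1) + 9 - 5 * s
  have hexp : 15 * (k + 1) = 5 * s + 9 * k + e := by omega
  have hy0 : 0 < y := lt_of_lt_of_le (by positivity) hy
  have hN0 : 0 < N := lt_of_lt_of_le (by positivity) hN
  have hye : (2 : ℝ) ^ (24 * e) ≤ y ^ e := by
    rw [pow_mul]
    exact pow_le_pow_left₀ (by positivity) hy e
  have hc' : (32 * (2 ^ s) ^ (k + 1) * 48 ^ (k + 1) : ℝ) ≤ 2 ^ (21 * k) * 2 ^ (24 * e) := by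
    rw [← pow_add]
    exact_mod_cast hc
  have key : 32 * (y ^ 5) ^ s * (2 ^ s) ^ (k + 1) * (y ^ 9 / 2 ^ 21) ^ k ≤
      (y ^ 15 / 48) ^ (k + 1) := by
    calc 32 * (y ^ 5) ^ s * (2 ^ s) ^ (k + 1) * (y ^ 9 / 2 ^ 21) ^ k
        = 32 * (2 ^ s) ^ (k + 1) * 48 ^ (k + 1) * (y ^ (5 * s) * y ^ (9 * k)) /
            (2 ^ (21 * k) * 48 ^ (k + 1)) := by
          rw [div_pow, ← pow_mul, ← pow_mul, ← pow_mul, pow_mul (2 : ℝ) 21 k]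
          field_simp
      _ ≤ 2 ^ (21 * k) * y ^ e * (y ^ (5 * s) * y ^ (9 * k)) /
            (2 ^ (21 * k) * 48 ^ (k + 1)) := by
          gcongr ?_ * _ / _
          exact hc'.trans (mul_le_mul_of_nonneg_left hye (by positivity))
      _ = (y ^ 15 / 48) ^ (k + 1) := by
          rw [div_pow, ← pow_mul, hexp, pow_add, pow_add]
          field_simp
          ring
  rw [div_le_div_iff₀ (pow_pos hN0 _) (by norm_num)]
  calc (y ^ 5) ^ s * (2 ^ s) ^ (k + 1) * T ^ (k + 1) * 32
      = T * (32 * (y ^ 5) ^ s * (2 ^ s) ^ (k + 1) * T ^ k) := by ring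
    _ ≤ T * (32 * (y ^ 5) ^ s * (2 ^ s) ^ (k + 1) * (y ^ 9 / 2 ^ 21) ^ k) := by gcongr
    _ ≤ T * N ^ (k + 1) := by
        gcongr
        exact key.trans (pow_le_pow_left₀ (by positivity) hN _)

/-- Even configurations of `j` triples span at most `3j/2` points; for `j = 2` the bound is
raised to `4`, which also forbids two triples sharing a pair. -/
def forbiddenSpan (j : ℕ) : ℕ := if j = 2 then 4 else 3 * j / 2

def forbiddenConfigs (v : ℕ) : Finset (Finset (Finset (Fin v))) :=
  (Icc 1 6).biUnion fun j => sparseConfigs (Fin v) j (forbiddenSpan j)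

section ForbiddenConfigs

variable {v : ℕ}

theorem mem_forbiddenConfigs {C : Finset (Finset (Fin v))} :
    C ∈ forbiddenConfigs v ↔ 1 ≤ #C ∧ #C ≤ 6 ∧ #(C.biUnion id) ≤ forbiddenSpan #C := by
  simp only [forbiddenConfigs, sparseConfigs, mem_biUnion, mem_Icc, mem_filter, mem_univ,
    true_and]
  constructor
  · rintro ⟨j, hj, rfl, hs⟩
    exact ⟨hj.1, hj.2, hs⟩
  · rintro ⟨h1, h6, hs⟩
    exact ⟨#C, ⟨h1, h6⟩, rfl, hs⟩

theorem IsEvenConfig.mem_forbiddenConfigs {C : Finset (Finset (Fin v))} (hC : IsEvenConfig C)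
    (h3 : ∀ b ∈ C, #b = 3) (hne : C.Nonempty) (h6 : #C ≤ 6) : C ∈ forbiddenConfigs v := by
  have hspan := hC.two_mul_card_biUnion_le
  rw [sum_congr rfl h3, sum_const, smul_eq_mul] at hspan
  refine _root_.mem_forbiddenConfigs.2 ⟨card_pos.2 hne, h6, ?_⟩
  unfold forbiddenSpan
  split_ifs <;> omega

theorem card_filter_subset_le_one_of_forall_not_subset {B : Finset (Finset (Fin v))}
    (h3 : ∀ b ∈ B, #b = 3) (hfree : ∀ C ∈ forbiddenConfigs v, ¬ C ⊆ B) {p : Finset (Fin v)}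
    (hp : #p = 2) : #{b ∈ B | p ⊆ b} ≤ 1 := by
  refine card_le_one.2 fun b hb b' hb' => ?_
  rw [mem_filter] at hb hb'
  by_contra hne
  have hinter : 2 ≤ #(b ∩ b') := hp ▸ card_le_card (subset_inter hb.2 hb'.2)
  have := card_union_add_card_inter b b'
  refine hfree {b, b'} (mem_forbiddenConfigs.2 ?_)
    (insert_subset hb.1 (singleton_subset_iff.2 hb'.1))
  simp only [card_pair hne, biUnion_insert, singleton_biUnion, id, forbiddenSpan, if_pos]
  have := h3 b hb.1
  have := h3 b' hb'.1
  omega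

theorem sum_forbiddenConfigs_le (hv : 0 < v) {T N : ℝ} (hT : 0 ≤ T) (hN : 0 ≤ N) :
    ∑ C ∈ forbiddenConfigs v, T ^ #C / N ^ #C ≤
      ∑ j ∈ Icc 1 6, (v : ℝ) ^ forbiddenSpan j * (2 ^ forbiddenSpan j) ^ j * T ^ j / N ^ j := by
  have : Nonempty (Fin v) := ⟨⟨0, hv⟩⟩
  have hdisj : (Icc 1 6 : Set ℕ).PairwiseDisjoint
      fun j => sparseConfigs (Fin v) j (forbiddenSpan j) := fun j _ j' _ hjj' =>
    disjoint_left.2 fun C hC hC' =>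
      hjj' ((mem_filter.1 hC).2.1.symm.trans (mem_filter.1 hC').2.1)
  rw [forbiddenConfigs, sum_biUnion hdisj]
  refine sum_le_sum fun j _ => ?_
  rw [sum_congr rfl fun C hC => by rw [(mem_filter.1 hC).2.1], sum_const, nsmul_eq_mul,
    mul_div_assoc]
  gcongr
  exact_mod_cast Fintype.card_fin v ▸ card_sparseConfigs_le (α := Fin v) j (forbiddenSpan j)

theorem sq_div_add_sum_forbiddenConfigs_le (hv : 0 < v) {T : ℕ} {y N : ℝ} (hy : 2 ^ 24 ≤ y)
    (hvy : (v : ℝ) = y ^ 5) (hT : (T : ℝ) ≤ y ^ 9 / 2 ^ 21) (hN : y ^ 15 / 48 ≤ N) :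
    (T : ℝ) ^ 2 / N + ∑ C ∈ forbiddenConfigs v, (T : ℝ) ^ #C / N ^ #C ≤ T / 4 := by
  have hN0 : 0 < N := lt_of_lt_of_le (by positivity) hN
  have hcoll : (T : ℝ) ^ 2 / N ≤ T / 32 := by
    have hy6 : (32 : ℝ) / 2 ^ 21 ≤ y ^ 6 / 48 := by
      have := pow_le_pow_left₀ (by positivity) hy 6
      linarith
    have : 32 * (T : ℝ) ≤ N :=
      calc 32 * (T : ℝ) ≤ y ^ 9 * (32 / 2 ^ 21) := by linarith
        _ ≤ y ^ 9 * (y ^ 6 / 48) := by gcongr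
        _ = y ^ 15 / 48 := by ring
        _ ≤ N := hN
    rw [div_le_div_iff₀ hN0 (by norm_num)]
    nlinarith [(Nat.cast_nonneg T : (0 : ℝ) ≤ T)]
  have hterm : ∀ j ∈ Icc 1 6,
      (v : ℝ) ^ forbiddenSpan j * (2 ^ forbiddenSpan j) ^ j * T ^ j / N ^ j ≤ T / 32 := by
    intro j hj
    rw [hvy]
    fin_cases hj <;>
      exact pow_mul_pow_mul_pow_div_pow_le hy (Nat.cast_nonneg T) hT hN (by norm_num)
        (by norm_num [forbiddenSpan]) (by norm_num [forbiddenSpan])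
  calc _ ≤ (T : ℝ) / 32 + ∑ _j ∈ Icc 1 6, (T : ℝ) / 32 :=
        add_le_add hcoll ((sum_forbiddenConfigs_le hv (Nat.cast_nonneg T) hN0.le).trans
          (sum_le_sum hterm))
    _ ≤ T / 4 := by
        rw [sum_const, Nat.card_Icc, nsmul_eq_mul]
        norm_num
        linarith [(Nat.cast_nonneg T : (0 : ℝ) ≤ T)]

theorem exists_forall_not_subset_forbiddenConfigs {y : ℝ} (hy : 2 ^ 24 ≤ y)
    (hvy : (v : ℝ) = y ^ 5) :
    ∃ B : Finset (Finset (Fin v)), (∀ b ∈ B, #b = 3) ∧ (∀ C ∈ forbiddenConfigs v, ¬ C ⊆ B) ∧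
      y ^ 9 / 2 ^ 23 ≤ #B := by
  have hv : (4 : ℝ) ≤ v := by
    have := pow_le_pow_left₀ (by positivity) hy 5
    rw [hvy]
    linarith
  set T := ⌊y ^ 9 / 2 ^ 21⌋₊
  have hT : (T : ℝ) ≤ y ^ 9 / 2 ^ 21 := Nat.floor_le (by positivity)
  have hT' : y ^ 9 / 2 ^ 22 ≤ T := by
    have hfloor : y ^ 9 / 2 ^ 21 < T + 1 := Nat.lt_floor_add_one _
    have hy9 : (2 : ℝ) ^ 216 ≤ y ^ 9 := by
      simpa [← pow_mul] using pow_le_pow_left₀ (by positivity) hy 9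
    linarith
  have hN : y ^ 15 / 48 ≤ (Fintype.card {b : Finset (Fin v) // #b = 3} : ℝ) := by
    simpa [hvy, ← pow_mul] using cube_div_le_choose_three (by exact_mod_cast hv : 4 ≤ v)
  have : Nonempty {b : Finset (Fin v) // #b = 3} := Fintype.card_pos_iff.1
    (by exact_mod_cast (lt_of_lt_of_le (by positivity) hN : (0 : ℝ) < _))
  obtain ⟨B, hBe, hfree, hB⟩ := exists_subset_range_forall_not_subset (ι := Fin T)
    (Function.Embedding.subtype fun b : Finset (Fin v) => #b = 3) (forbiddenConfigs v)
    fun C hC => card_pos.1 (mem_forbiddenConfigs.1 hC).1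
  refine ⟨B, fun b hb => ?_, hfree, ?_⟩
  · obtain ⟨b', rfl⟩ := hBe hb
    exact b'.2
  · have herr := sq_div_add_sum_forbiddenConfigs_le
      (by exact_mod_cast (by linarith : (0 : ℝ) < v)) hy hvy hT hN
    rw [Fintype.card_fin] at hB
    linarith

end ForbiddenConfigs

/-- There is a constant `c > 0` such that for all sufficiently large `v` there exists a
6-even-free triple packing of order `v` with at least `c·v^{9/5}` blocks. -/
theorem exists_six_even_free_packing :
    ∃ c : ℝ, 0 < c ∧ ∃ v₀ : ℕ, ∀ v : ℕ, v₀ ≤ v →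
      ∃ B : Finset (Finset (Fin v)),
        (∀ b ∈ B, b.card = 3) ∧
        (∀ p : Finset (Fin v), p.card = 2 → (B.filter fun b => p ⊆ b).card ≤ 1) ∧
        (∀ C ⊆ B, C.Nonempty → C.card ≤ 6 → ¬ IsEvenConfig C) ∧
        c * (v : ℝ) ^ ((9 : ℝ) / 5) ≤ (B.card : ℝ) := by
  refine ⟨1 / 2 ^ 23, by positivity, 2 ^ 120, fun v hv => ?_⟩
  have hv0 : (0 : ℝ) ≤ v := Nat.cast_nonneg v
  set y := (v : ℝ) ^ ((1 : ℝ) / 5) with hy_def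
  have hrpow : ∀ n : ℕ, (v : ℝ) ^ ((n : ℝ) / 5) = y ^ n := fun n => by
    rw [hy_def, ← Real.rpow_natCast, ← Real.rpow_mul hv0]
    ring_nf
  have hvy : (v : ℝ) = y ^ 5 := by simpa using hrpow 5
  have hy : (2 : ℝ) ^ 24 ≤ y := le_of_pow_le_pow_left₀ (n := 5) (by norm_num) (by positivity)
    (by rw [← hvy, ← pow_mul]; exact_mod_cast hv)
  obtain ⟨B, h3, hfree, hB⟩ := exists_forall_not_subset_forbiddenConfigs hy hvy
  refine ⟨B, h3, fun p hp => card_filter_subset_le_one_of_forall_not_subset h3 hfree hp,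
    fun C hCB hne h6 heven => hfree C ?_ hCB, ?_⟩
  · exact heven.mem_forbiddenConfigs (fun b hb => h3 b (hCB hb)) hne h6
  · rw [← Nat.cast_ofNat (R := ℝ) (n := 9), hrpow 9]
    linarith
end

section
/- For every integer x ≥ 2 there exists an integer M₀ such that for all m ≥ M₀: (a) every (m,n,1,x) X-code of constant weight x+1 satisfies n·C(x+1,2) ≤ C(m,2); and (b) there exists an (m,n,1,x) X-code of constant weight x+1 with n·C(x+1,2) = C(m,2) if and only if there exists a Steiner 2-design S(2, x+1, m). -/
/-- There exists a Steiner 2-design `S(2,k,m)` on the point set `Fin m`. -/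
def ExistsSteiner2Design (k m : ℕ) : Prop :=
  ∃ B : Finset (Finset (Fin m)), (∀ b ∈ B, b.card = k) ∧
    ∀ p : Finset (Fin m), p.card = 2 → ∃! b, b ∈ B ∧ p ⊆ b

/-! An X-code of constant weight `x + 1` with `d = 1` is the same as an `x`-cover-free family of
`(x + 1)`-subsets of the coordinates (its supports). Blocks meeting every other block in at most
one point contribute disjoint sets of pairs. A bad block, one meeting another block in two points,
has by cover-freeness a private point `π`, and then all `m - x - 1` pairs `{π, y}` with `y`
outside the block are covered by no block; each uncovered pair arises at most twice this way.
Once `m - x - 1 > x (x + 1) = 2·C(x + 1, 2)`, the uncovered pairs more than pay for the pairs of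
the bad blocks, giving `n·C(x + 1, 2) ≤ C(m, 2)`, with equality only if there are no bad blocks
and no uncovered pairs, i.e. if the supports form a Steiner system. -/

open Finset

section SetSystems

variable {ι : Type*} [DecidableEq ι] {F : Finset (Finset ι)} {x k : ℕ}

def IsCoverFree (x : ℕ) (F : Finset (Finset ι)) : Prop :=
  ∀ b ∈ F, ∀ S ⊆ F, b ∉ S → S.card ≤ x → ¬ b ⊆ S.sup id

def IsPrivatePoint (F : Finset (Finset ι)) (b : Finset ι) (j : ι) : Prop :=
  j ∈ b ∧ ∀ c ∈ F, c ≠ b → j ∉ c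

def uncoveredPairs [Fintype ι] (F : Finset (Finset ι)) : Finset (Finset ι) :=
  (univ.powersetCard 2).filter fun p => ¬ ∃ b ∈ F, p ⊆ b

def IsSteinerSystem (F : Finset (Finset ι)) : Prop :=
  ∀ p : Finset ι, p.card = 2 → ∃! b, b ∈ F ∧ p ⊆ b

theorem one_lt_card_inter_of_subset {p b c : Finset ι} (hp : p.card = 2) (hpb : p ⊆ b)
    (hpc : p ⊆ c) : 1 < (b ∩ c).card :=
  (by omega : 1 < p.card).trans_le (card_le_card (subset_inter hpb hpc))

theorem card_mul_choose_two_add_card_uncoveredPairs [Fintype ι]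
    (hF : (F : Set (Finset ι)).Pairwise fun b c => (b ∩ c).card ≤ 1)
    (hk : ∀ b ∈ F, b.card = k) :
    F.card * k.choose 2 + (uncoveredPairs F).card = (Fintype.card ι).choose 2 := by
  have hcovered : (univ.powersetCard 2).filter (fun p => ∃ b ∈ F, p ⊆ b) =
      F.biUnion (powersetCard 2) := by
    ext p
    simp only [mem_filter, mem_powersetCard, subset_univ, true_and, mem_biUnion]
    constructor
    · rintro ⟨hp, b, hb, hpb⟩
      exact ⟨b, hb, hpb, hp⟩
    · rintro ⟨b, hb, hpb, hp⟩
      exact ⟨hp, b, hb, hpb⟩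
  have hdisj : (F : Set (Finset ι)).PairwiseDisjoint (powersetCard 2) := by
    intro b hb c hc hbc
    refine disjoint_left.2 fun p hpb hpc => ?_
    rw [mem_powersetCard] at hpb hpc
    exact (hF hb hc hbc).not_gt (one_lt_card_inter_of_subset hpb.2 hpb.1 hpc.1)
  rw [← card_univ, ← card_powersetCard, ← card_filter_add_card_filter_not (s := univ.powersetCard 2)
    (fun p => ∃ b ∈ F, p ⊆ b), hcovered, card_biUnion hdisj,
    sum_congr rfl fun b hb => by rw [card_powersetCard, hk b hb], sum_const, smul_eq_mul,
    uncoveredPairs]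

theorem isSteinerSystem_iff [Fintype ι] : IsSteinerSystem F ↔
    (F : Set (Finset ι)).Pairwise (fun b c => (b ∩ c).card ≤ 1) ∧ uncoveredPairs F = ∅ := by
  constructor
  · intro hF
    refine ⟨fun b hb c hc hbc => ?_, eq_empty_of_forall_notMem fun p hp => ?_⟩
    · by_contra! hbc'
      obtain ⟨p, hp, hpcard⟩ := exists_subset_card_eq hbc'
      exact hbc ((hF p hpcard).unique ⟨hb, hp.trans inter_subset_left⟩
        ⟨hc, hp.trans inter_subset_right⟩)
    · simp only [uncoveredPairs, mem_filter, mem_powersetCard] at hp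
      obtain ⟨b, hb, -⟩ := hF p hp.1.2
      exact hp.2 ⟨b, hb⟩
  · rintro ⟨hpair, hunc⟩ p hp
    have hcov : ∃ b ∈ F, p ⊆ b := by
      by_contra h
      have : p ∈ uncoveredPairs F := mem_filter.2 ⟨mem_powersetCard.2 ⟨subset_univ _, hp⟩, h⟩
      simp [hunc] at this
    obtain ⟨b, hb, hpb⟩ := hcov
    refine ⟨b, ⟨hb, hpb⟩, fun c ⟨hc, hpc⟩ => ?_⟩
    by_contra hcb
    exact (hpair hc hb hcb).not_gt (one_lt_card_inter_of_subset hp hpc hpb)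

theorem IsSteinerSystem.card_mul_choose_two [Fintype ι] (hF : IsSteinerSystem F)
    (hk : ∀ b ∈ F, b.card = k) : F.card * k.choose 2 = (Fintype.card ι).choose 2 := by
  obtain ⟨hpair, hunc⟩ := isSteinerSystem_iff.1 hF
  simpa [hunc] using card_mul_choose_two_add_card_uncoveredPairs hpair hk

theorem isCoverFree_of_pairwise_card_inter_le_one
    (hF : (F : Set (Finset ι)).Pairwise fun b c => (b ∩ c).card ≤ 1)
    (hk : ∀ b ∈ F, x < b.card) : IsCoverFree x F := by
  intro b hb S hSF hbS hSx hcov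
  have hsub : b ⊆ S.biUnion (b ∩ ·) := fun j hj => by
    obtain ⟨c, hc, hjc⟩ := mem_sup.1 (hcov hj)
    exact mem_biUnion.2 ⟨c, hc, mem_inter.2 ⟨hj, hjc⟩⟩
  have : b.card ≤ x := calc
    b.card ≤ ∑ c ∈ S, (b ∩ c).card := (card_le_card hsub).trans card_biUnion_le
    _ ≤ ∑ c ∈ S, 1 := sum_le_sum fun c hc => hF hb (hSF hc) fun h => hbS (h ▸ hc)
    _ ≤ x := by simpa using hSx
  exact (hk b hb).not_ge this

theorem IsCoverFree.exists_isPrivatePoint (hF : IsCoverFree x F) {b c : Finset ι} (hb : b ∈ F)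
    (hc : c ∈ F) (hcb : c ≠ b) (hbc : (b \ c).card < x) : ∃ j, IsPrivatePoint F b j := by
  -- Otherwise `c` and one other block through each point of `b \ c` are `≤ x` blocks covering `b`.
  by_contra! hpriv
  have hcover : ∀ j ∈ b, ∃ d ∈ F, d ≠ b ∧ j ∈ d := by
    intro j hj
    by_contra! h
    exact hpriv j ⟨hj, h⟩
  choose! d hdF hdb hjd using hcover
  refine hF b hb (insert c ((b \ c).image d)) ?_ ?_ ?_ ?_
  · refine insert_subset hc fun e he => ?_
    obtain ⟨j, hj, rfl⟩ := mem_image.1 he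
    exact hdF j (mem_sdiff.1 hj).1
  · rw [mem_insert, mem_image, not_or, not_exists]
    exact ⟨hcb.symm, fun j ⟨hj, hdj⟩ => hdb j (mem_sdiff.1 hj).1 hdj⟩
  · exact (card_insert_le _ _).trans (Nat.succ_le_of_lt (card_image_le.trans_lt hbc))
  · intro j hj
    rw [mem_sup]
    by_cases hjc : j ∈ c
    · exact ⟨c, mem_insert_self _ _, hjc⟩
    · exact ⟨d j, mem_insert_of_mem (mem_image_of_mem _ (mem_sdiff.2 ⟨hj, hjc⟩)),
        hjd j hj⟩

/-- Double counting of the uncovered pairs `{π b, y}` with `π b` a private point of `b` and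
`y ∉ b`: such a pair determines `b` once it is known which of its two points is `π b`. -/
theorem card_mul_le_card_uncoveredPairs_mul_two [Fintype ι] {P : Finset (Finset ι)}
    (hPF : P ⊆ F) (hk : ∀ b ∈ P, b.card = k) (hpriv : ∀ b ∈ P, ∃ j, IsPrivatePoint F b j) :
    P.card * (Fintype.card ι - k) ≤ (uncoveredPairs F).card * 2 := by
  cases isEmpty_or_nonempty ι
  · simp
  choose! π hπb hπF using hpriv
  have hπinj : ∀ b ∈ P, ∀ c ∈ P, π b ∈ c → c = b := fun b hb c hc h => by
    by_contra hcb
    exact hπF b hb c (hPF hc) hcb h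
  refine card_mul_le_card_mul (fun b z => π b ∈ z) (fun b hb => ?_) (fun z hz => ?_)
  · have hne : ∀ y ∈ bᶜ, π b ≠ y := fun y hy h => mem_compl.1 hy (h ▸ hπb b hb)
    rw [← hk b hb, ← card_compl]
    refine card_le_card_of_injOn (fun y => {π b, y}) (fun y hy => ?_) (fun y hy y' hy' h => ?_)
    · refine (mem_bipartiteAbove _).2 ⟨mem_filter.2 ⟨?_, ?_⟩, mem_insert_self _ _⟩
      · exact mem_powersetCard.2 ⟨subset_univ _, card_pair (hne y hy)⟩
      · rintro ⟨c, hc, hyc⟩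
        have hcb : c = b := by
          by_contra hcb
          exact hπF b hb c hc hcb (hyc (mem_insert_self _ _))
        exact mem_compl.1 hy (hcb ▸ hyc (mem_insert_of_mem (mem_singleton_self y)))
    · have : y ∈ ({π b, y'} : Finset ι) := (congrArg (y ∈ ·) h).mp (by simp)
      simpa [(hne y hy).symm] using this
  · rw [← (mem_powersetCard.1 (mem_filter.1 hz).1).2]
    refine card_le_card_of_injOn π (fun b hb => (mem_bipartiteBelow _).1 hb |>.2)
      (fun b hb c hc h => ?_)
    have hb := (mem_bipartiteBelow _).1 hb
    have hc := (mem_bipartiteBelow _).1 hc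
    exact hπinj c hc.1 b hb.1 (h ▸ hπb b hb.1)

theorem IsCoverFree.two_mul_card_mul_choose_two_add_card_le [Fintype ι] (hF : IsCoverFree x F)
    (hk : ∀ b ∈ F, b.card = x + 1) (hm : (x + 1) * (x + 1) < Fintype.card ι) :
    2 * (F.card * (x + 1).choose 2) +
        (F.filter fun b => ∃ c ∈ F, c ≠ b ∧ 1 < (b ∩ c).card).card ≤
      2 * (Fintype.card ι).choose 2 := by
  set R := F.filter fun b => ∃ c ∈ F, c ≠ b ∧ 1 < (b ∩ c).card
  set G := F.filter fun b => ¬ ∃ c ∈ F, c ≠ b ∧ 1 < (b ∩ c).card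
  have hGR : G.card + R.card = F.card := by
    rw [add_comm]
    exact card_filter_add_card_filter_not _
  have hG : G.card * (x + 1).choose 2 + (uncoveredPairs F).card ≤ (Fintype.card ι).choose 2 := by
    have hpair : (G : Set (Finset ι)).Pairwise fun b c => (b ∩ c).card ≤ 1 := by
      intro b hb c hc hbc
      by_contra! h
      exact (mem_filter.1 hb).2 ⟨c, (mem_filter.1 hc).1, hbc.symm, h⟩
    rw [← card_mul_choose_two_add_card_uncoveredPairs hpair fun b hb => hk b (mem_filter.1 hb).1]
    refine Nat.add_le_add_left (card_le_card fun p hp => ?_) _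
    simp only [uncoveredPairs, mem_filter] at hp ⊢
    exact ⟨hp.1, fun ⟨b, hb, hpb⟩ => hp.2 ⟨b, (mem_filter.1 hb).1, hpb⟩⟩
  have hR : R.card * (Fintype.card ι - (x + 1)) ≤ (uncoveredPairs F).card * 2 := by
    refine card_mul_le_card_uncoveredPairs_mul_two (filter_subset _ _)
      (fun b hb => hk b (mem_filter.1 hb).1) fun b hb => ?_
    obtain ⟨hbF, c, hc, hcb, hbc⟩ := mem_filter.1 hb
    have := card_sdiff_add_card_inter b c
    have := hk b hbF
    exact hF.exists_isPrivatePoint hbF hc hcb (by omega)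
  have hC : (x + 1).choose 2 * 2 = (x + 1) * x := by
    simpa using (Nat.add_one_mul_choose_eq x 1).symm
  have hR' : R.card * ((x + 1) * x + 1) ≤ R.card * (Fintype.card ι - (x + 1)) :=
    Nat.mul_le_mul_left _ (by rw [Nat.le_sub_iff_add_le (by nlinarith)]; nlinarith)
  rw [← hGR]
  nlinarith

theorem IsCoverFree.card_mul_choose_two_le [Fintype ι] (hF : IsCoverFree x F)
    (hk : ∀ b ∈ F, b.card = x + 1) (hm : (x + 1) * (x + 1) < Fintype.card ι) :
    F.card * (x + 1).choose 2 ≤ (Fintype.card ι).choose 2 := by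
  have := hF.two_mul_card_mul_choose_two_add_card_le hk hm
  omega

theorem IsCoverFree.isSteinerSystem_of_card_mul_choose_two_eq [Fintype ι] (hF : IsCoverFree x F)
    (hk : ∀ b ∈ F, b.card = x + 1) (hm : (x + 1) * (x + 1) < Fintype.card ι)
    (heq : F.card * (x + 1).choose 2 = (Fintype.card ι).choose 2) : IsSteinerSystem F := by
  have hbound := hF.two_mul_card_mul_choose_two_add_card_le hk hm
  have hpair : (F : Set (Finset ι)).Pairwise fun b c => (b ∩ c).card ≤ 1 := by
    have hR : (F.filter fun b => ∃ c ∈ F, c ≠ b ∧ 1 < (b ∩ c).card) = ∅ :=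
      card_eq_zero.1 (by omega)
    rw [filter_eq_empty_iff] at hR
    intro b hb c hc hbc
    by_contra! h
    exact hR hb ⟨c, hc, hbc.symm, h⟩
  have := card_mul_choose_two_add_card_uncoveredPairs hpair hk
  exact isSteinerSystem_iff.2 ⟨hpair, card_eq_zero.1 (by omega)⟩

end SetSystems

section BinaryVectors

variable {ι : Type*} [Fintype ι] {x k : ℕ}

def supp (s : ι → ZMod 2) : Finset ι :=
  univ.filter fun j => s j ≠ 0

theorem wt_eq_card_supp (s : ι → ZMod 2) : wt s = (supp s).card := rfl

theorem supp_injective : Function.Injective (supp : (ι → ZMod 2) → Finset ι) := by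
  intro s t h
  funext j
  have hj : s j ≠ 0 ↔ t j ≠ 0 := by simpa [supp] using congrArg (j ∈ ·) h
  -- `ZMod 2` is `Fin 2` by definition, so `Fin.eq_one_of_ne_zero` applies.
  by_cases hs : s j = 0
  · rw [hs, eq_comm, ← not_ne_iff, ← hj, not_ne_iff, hs]
  · rw [Fin.eq_one_of_ne_zero _ hs, Fin.eq_one_of_ne_zero _ (hj.1 hs)]

variable [DecidableEq ι]

theorem card_image_supp (X : Finset (ι → ZMod 2)) : (X.image supp).card = X.card :=
  card_image_of_injective _ supp_injective

theorem card_eq_of_mem_image_supp {X : Finset (ι → ZMod 2)} (hX : ∀ s ∈ X, wt s = k) :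
    ∀ b ∈ X.image supp, b.card = k := by
  intro b hb
  obtain ⟨s, hs, rfl⟩ := mem_image.1 hb
  exact hX s hs

def indicatorVec (b : Finset ι) : ι → ZMod 2 :=
  fun j => if j ∈ b then 1 else 0

theorem supp_indicatorVec (b : Finset ι) : supp (indicatorVec b) = b := by
  ext j
  by_cases hj : j ∈ b <;> simp [supp, indicatorVec, hj]

theorem wt_indicatorVec (b : Finset ι) : wt (indicatorVec b) = b.card := by
  rw [wt_eq_card_supp, supp_indicatorVec]

theorem indicatorVec_injective : Function.Injective (indicatorVec : Finset ι → ι → ZMod 2) :=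
  Function.LeftInverse.injective supp_indicatorVec

theorem isXCode_one_iff_isCoverFree (X : Finset (ι → ZMod 2)) :
    IsXCode 1 x X ↔ IsCoverFree x (X.image supp) := by
  constructor
  · intro hX b hb S hSX hbS hSx hcov
    obtain ⟨u, hu, rfl⟩ := mem_image.1 hb
    have hTS : (X.filter (supp · ∈ S)).image supp = S := by
      rw [← filter_image (p := (· ∈ S)), filter_mem_eq_inter, inter_eq_right.2 hSX]
    set T := X.filter (supp · ∈ S)
    have hTcard : T.card = S.card := by
      rw [← hTS, card_image_of_injective _ supp_injective]
    obtain ⟨j, hju, hjT⟩ := hX T {u} (filter_subset _ _) (singleton_subset_iff.2 hu)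
      (disjoint_singleton_right.2 fun h => hbS (mem_filter.1 h).2) (hTcard ▸ hSx)
      (by simp) (by simp)
    rw [sum_singleton] at hju
    obtain ⟨c, hcS, hjc⟩ := mem_sup.1 (hcov (mem_filter.2 ⟨mem_univ j, by simp [hju]⟩))
    rw [← hTS] at hcS
    obtain ⟨s, hsT, rfl⟩ := mem_image.1 hcS
    exact (mem_filter.1 hjc).2 (hjT s hsT)
  · intro hF S₁ S₂ hS₁ hS₂ hdisj hS₁x h1 h2
    obtain ⟨u, rfl⟩ := card_eq_one.1 (le_antisymm h2 h1)
    have hu : u ∈ X := hS₂ (mem_singleton_self u)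
    have huS₁ : supp u ∉ S₁.image supp := fun h => by
      obtain ⟨s, hs, hsu⟩ := mem_image.1 h
      exact disjoint_singleton_right.1 hdisj (supp_injective hsu ▸ hs)
    obtain ⟨j, hju, hj⟩ := not_subset.1 (hF (supp u) (mem_image_of_mem _ hu) (S₁.image supp)
      (image_subset_image hS₁) huS₁ (card_image_le.trans hS₁x))
    refine ⟨j, ?_, fun s hs => ?_⟩
    · rw [sum_singleton]
      exact Fin.eq_one_of_ne_zero _ (mem_filter.1 hju).2
    · by_contra h
      exact hj (mem_sup.2 ⟨supp s, mem_image_of_mem _ hs, mem_filter.2 ⟨mem_univ _, h⟩⟩)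

theorem IsSteinerSystem.isXCode_image_indicatorVec {B : Finset (Finset ι)}
    (hB : IsSteinerSystem B) (hk : ∀ b ∈ B, x < b.card) : IsXCode 1 x (B.image indicatorVec) := by
  rw [isXCode_one_iff_isCoverFree, image_image, Function.LeftInverse.comp_eq_id supp_indicatorVec,
    image_id]
  exact isCoverFree_of_pairwise_card_inter_le_one (isSteinerSystem_iff.1 hB).1 hk

end BinaryVectors

theorem xcode_constant_weight_bound_general (x : ℕ) :
    ∃ M₀ : ℕ, ∀ m : ℕ, M₀ ≤ m →
      (∀ (n : ℕ) (X : Finset (Fin m → ZMod 2)), X.card = n →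
        (∀ s ∈ X, wt s = x + 1) → IsXCode 1 x X →
        n * (x + 1).choose 2 ≤ m.choose 2) ∧
      ((∃ (n : ℕ) (X : Finset (Fin m → ZMod 2)), X.card = n ∧
          (∀ s ∈ X, wt s = x + 1) ∧ IsXCode 1 x X ∧
          n * (x + 1).choose 2 = m.choose 2) ↔ ExistsSteiner2Design (x + 1) m) := by
  refine ⟨(x + 1) * (x + 1) + 1, fun m hm => ?_⟩
  have hm' : (x + 1) * (x + 1) < Fintype.card (Fin m) := by simpa using hm
  refine ⟨fun n X hn hw hX => ?_, ⟨?_, ?_⟩⟩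
  · rw [← hn, ← card_image_supp]
    simpa using ((isXCode_one_iff_isCoverFree X).1 hX).card_mul_choose_two_le
      (card_eq_of_mem_image_supp hw) hm'
  · rintro ⟨n, X, rfl, hw, hX, heq⟩
    exact ⟨X.image supp, card_eq_of_mem_image_supp hw,
      ((isXCode_one_iff_isCoverFree X).1 hX).isSteinerSystem_of_card_mul_choose_two_eq
        (card_eq_of_mem_image_supp hw) hm' (by rwa [card_image_supp, Fintype.card_fin])⟩
  · rintro ⟨B, hBk, hB⟩
    refine ⟨B.card, B.image indicatorVec, card_image_of_injective _ indicatorVec_injective,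
      ?_, IsSteinerSystem.isXCode_image_indicatorVec hB fun b hb => by simp [hBk b hb], ?_⟩
    · simp only [mem_image]
      rintro _ ⟨b, hb, rfl⟩
      rw [wt_indicatorVec, hBk b hb]
    · simpa using IsSteinerSystem.card_mul_choose_two hB hBk

/-- For every `x ≥ 2` and all sufficiently large `m`: (a) every `(m,n,1,x)` X-code of
constant weight `x+1` satisfies `n·C(x+1,2) ≤ C(m,2)`; (b) such an X-code with
`n·C(x+1,2) = C(m,2)` exists iff a Steiner 2-design `S(2,x+1,m)` exists. -/
theorem xcode_constant_weight_bound (x : ℕ) (hx : 2 ≤ x) :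
    ∃ M₀ : ℕ, ∀ m : ℕ, M₀ ≤ m →
      (∀ (n : ℕ) (X : Finset (Fin m → ZMod 2)), X.card = n →
        (∀ s ∈ X, wt s = x + 1) → IsXCode 1 x X →
        n * (x + 1).choose 2 ≤ m.choose 2) ∧
      ((∃ (n : ℕ) (X : Finset (Fin m → ZMod 2)), X.card = n ∧
          (∀ s ∈ X, wt s = x + 1) ∧ IsXCode 1 x X ∧
          n * (x + 1).choose 2 = m.choose 2) ↔ ExistsSteiner2Design (x + 1) m) :=
  xcode_constant_weight_bound_general x
end

section
/- Let d and x be positive integers and let n ≥ max{2d, d+x} be an integer. If m is a positive integer with m ≥ 2^{x+1}·(d+x)·ln n (natural logarithm), then there exists an (m,n,d,x) X-code. -/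
open Finset

section Columns

variable {κ : Type*} [Fintype κ] [DecidableEq κ]

lemma two_pow_card_mul_card_vanishing (I : Finset κ) :
    2 ^ #I * #{v : κ → ZMod 2 | ∀ i ∈ I, v i = 0} = 2 ^ Fintype.card κ := by
  have hpi : ({v : κ → ZMod 2 | ∀ i ∈ I, v i = 0} : Finset _) =
      Fintype.piFinset fun i => if i ∈ I then {0} else univ := by
    ext v
    simp only [mem_filter, mem_univ, true_and, Fintype.mem_piFinset]
    refine forall_congr' fun i => ?_
    split_ifs <;> simp [*]
  have hcompl : ({i | i ∉ I} : Finset κ) = Iᶜ := by ext; simp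
  rw [hpi, Fintype.card_piFinset]
  simp only [apply_ite card, card_singleton, card_univ, ZMod.card]
  rw [prod_ite, prod_const_one, prod_const, one_mul, ← pow_add, hcompl, card_add_card_compl]

lemma two_pow_card_add_one_mul_card_filter {I J : Finset κ} (hIJ : Disjoint I J)
    (hJ : J.Nonempty) :
    2 ^ (#I + 1) * #{v : κ → ZMod 2 | ∑ i ∈ J, v i = 1 ∧ ∀ i ∈ I, v i = 0} =
      2 ^ Fintype.card κ := by
  obtain ⟨i₀, hi₀⟩ := hJ
  have hi₀I : i₀ ∉ I := disjoint_right.mp hIJ hi₀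
  set Z : Finset (κ → ZMod 2) := {v | ∀ i ∈ I, v i = 0}
  let flip : (κ → ZMod 2) → (κ → ZMod 2) := fun v => v + Pi.single i₀ 1
  have flip_flip (v) : flip (flip v) = v := by
    ext i
    simp only [flip, Pi.add_apply, add_assoc, CharTwo.add_self_eq_zero, add_zero]
  have flip_mem {v} : flip v ∈ Z ↔ v ∈ Z := by
    simp only [Z, flip, mem_filter, mem_univ, true_and, Pi.add_apply]
    refine forall₂_congr fun i hi => ?_
    rw [Pi.single_eq_of_ne (ne_of_mem_of_not_mem hi hi₀I), add_zero]
  have sum_flip (v) : ∑ i ∈ J, flip v i = 1 ↔ ¬∑ i ∈ J, v i = 1 := by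
    simp only [flip, Pi.add_apply, sum_add_distrib, sum_pi_single', if_pos hi₀]
    generalize ∑ i ∈ J, v i = s
    revert s; decide
  have halves : #{v ∈ Z | ∑ i ∈ J, v i = 1} = #{v ∈ Z | ¬∑ i ∈ J, v i = 1} := by
    refine card_nbij' flip flip ?_ ?_ (fun v _ => flip_flip v) (fun v _ => flip_flip v) <;>
    · intro v hv
      simp only [coe_filter, Set.mem_ofPred_eq, flip_mem, sum_flip] at hv ⊢
      tauto
  have hfilter : ({v | ∑ i ∈ J, v i = 1 ∧ ∀ i ∈ I, v i = 0} : Finset (κ → ZMod 2)) =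
      {v ∈ Z | ∑ i ∈ J, v i = 1} := by
    ext v; simp only [Z, mem_filter, mem_univ, true_and]; tauto
  rw [hfilter, pow_succ, mul_assoc, two_mul]
  nth_rw 2 [halves]
  rw [card_filter_add_card_filter_not, two_pow_card_mul_card_vanishing]

lemma card_filter_div_card_eq_inv_two_pow {I J : Finset κ} (hIJ : Disjoint I J)
    (hJ : J.Nonempty) :
    (#{v : κ → ZMod 2 | ∑ i ∈ J, v i = 1 ∧ ∀ i ∈ I, v i = 0} : ℝ) /
      Fintype.card (κ → ZMod 2) = ((2 : ℝ) ^ (#I + 1))⁻¹ := by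
  rw [Fintype.card_fun, ZMod.card, div_eq_iff (by positivity),
    ← two_pow_card_add_one_mul_card_filter hIJ hJ]
  push_cast
  field_simp

end Columns

lemma exists_forall_exists_mem_of_sum_lt_one {α β ι : Type*} [Fintype α] [Nonempty α]
    [Fintype ι] (P : Finset β) (G : β → Finset α)
    (h : ∑ p ∈ P, (1 - (#(G p) : ℝ) / Fintype.card α) ^ Fintype.card ι < 1) :
    ∃ ω : ι → α, ∀ p ∈ P, ∃ j, ω j ∈ G p := by
  classical
  let bad (p : β) : Finset (ι → α) := Fintype.piFinset fun _ => (G p)ᶜ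
  have hα : (0 : ℝ) < Fintype.card α := by exact_mod_cast Fintype.card_pos
  have card_bad (p : β) : (#(bad p) : ℝ) =
      (1 - #(G p) / Fintype.card α) ^ Fintype.card ι * Fintype.card (ι → α) := by
    rw [Fintype.card_piFinset, prod_const, card_univ, card_compl, Fintype.card_fun,
      Nat.cast_pow, Nat.cast_pow, Nat.cast_sub (card_le_univ _), ← mul_pow, sub_mul,
      div_mul_cancel₀ _ hα.ne', one_mul]
  have hlt : #(P.biUnion bad) < #(univ : Finset (ι → α)) := by
    rw [card_univ]
    suffices (#(P.biUnion bad) : ℝ) < Fintype.card (ι → α) by exact_mod_cast this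
    calc (#(P.biUnion bad) : ℝ) ≤ ∑ p ∈ P, (#(bad p) : ℝ) := by exact_mod_cast card_biUnion_le
      _ < Fintype.card (ι → α) := by
        simp_rw [card_bad, ← sum_mul]
        exact mul_lt_of_lt_one_left (by exact_mod_cast Fintype.card_pos) h
  obtain ⟨ω, -, hω⟩ := exists_mem_notMem_of_card_lt_card hlt
  refine ⟨ω, fun p hp => ?_⟩
  by_contra! hmiss
  exact hω (mem_biUnion.mpr ⟨p, hp, Fintype.mem_piFinset.mpr fun j => mem_compl.mpr (hmiss j)⟩)

section Family

variable {κ ι : Type*} {d x : ℕ}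

def IsXFamily (d x : ℕ) (u : κ → ι → ZMod 2) : Prop :=
  ∀ I J : Finset κ, Disjoint I J → #I ≤ x → 1 ≤ #J → #J ≤ d →
    ∃ j : ι, ∑ i ∈ J, u i j = 1 ∧ ∀ i ∈ I, u i j = 0

variable {u : κ → ι → ZMod 2}

lemma IsXFamily.injective [DecidableEq κ] (hu : IsXFamily d x u) (hd : 0 < d) (hx : 0 < x) :
    Function.Injective u := by
  intro i i' hii'
  by_contra hne
  obtain ⟨j, hj, hj'⟩ := hu {i'} {i} (disjoint_singleton.mpr (Ne.symm hne))
    (by rw [card_singleton]; exact hx) (by simp) (by rw [card_singleton]; exact hd)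
  rw [sum_singleton, congrFun hii' j, hj' i' (mem_singleton_self i')] at hj
  exact zero_ne_one hj

lemma IsXFamily.isXCode_image [Fintype κ] [Fintype ι] (hu : IsXFamily d x u)
    (hinj : Function.Injective u) : IsXCode d x (univ.image u) := by
  intro S₁ S₂ hS₁ hS₂ hdisj h₁ h₂ h₂'
  obtain ⟨I, -, rfl⟩ := subset_image_iff.mp hS₁
  obtain ⟨J, -, rfl⟩ := subset_image_iff.mp hS₂
  rw [card_image_of_injective _ hinj] at h₁ h₂ h₂'
  obtain ⟨j, hj, hj'⟩ := hu I J ((disjoint_image hinj).mp hdisj) h₁ h₂ h₂'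
  refine ⟨j, by rwa [sum_image hinj.injOn], ?_⟩
  simpa using hj'

end Family

lemma sum_Icc_choose_le {n k : ℕ} (hn : 2 ≤ n) (hk : k ≤ n) (d : ℕ) :
    ∑ b ∈ Icc 1 d, k.choose b ≤ k * n ^ (d - 1) := by
  induction d with
  | zero => simp
  | succ d ih =>
    rcases Nat.eq_zero_or_pos d with rfl | hd
    · simp
    have h_top : 2 * k.choose (d + 1) ≤ k * n ^ d :=
      calc 2 * k.choose (d + 1) ≤ (d + 1).factorial * k.choose (d + 1) := by
            gcongr; exact (Nat.succ_le_succ hd).trans (Nat.self_le_factorial _)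
        _ = k.descFactorial (d + 1) := (Nat.descFactorial_eq_factorial_mul_choose _ _).symm
        _ ≤ k ^ (d + 1) := Nat.descFactorial_le_pow _ _
        _ = k * k ^ d := pow_succ' _ _
        _ ≤ k * n ^ d := by gcongr
    have h_prev : 2 * (k * n ^ (d - 1)) ≤ k * n ^ d := by
      obtain ⟨e, rfl⟩ : ∃ e, d = e + 1 := ⟨d - 1, by omega⟩
      rw [Nat.add_sub_cancel, pow_succ, mul_comm 2, ← mul_assoc]
      exact Nat.mul_le_mul_left _ hn
    rw [sum_Icc_succ_top (by omega), Nat.add_sub_cancel]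
    omega

lemma card_filter_powerset_le {α : Type*} (s : Finset α) {n : ℕ} (hn : 2 ≤ n) (hs : #s ≤ n)
    (d : ℕ) : #{J ∈ s.powerset | 1 ≤ #J ∧ #J ≤ d} ≤ #s * n ^ (d - 1) := by
  classical
  calc #{J ∈ s.powerset | 1 ≤ #J ∧ #J ≤ d}
      ≤ #((Icc 1 d).biUnion fun b => powersetCard b s) := by
        refine card_le_card fun J hJ => ?_
        simp only [mem_filter, mem_powerset] at hJ
        exact mem_biUnion.mpr ⟨#J, mem_Icc.mpr hJ.2, mem_powersetCard.mpr ⟨hJ.1, rfl⟩⟩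
    _ ≤ ∑ b ∈ Icc 1 d, #(powersetCard b s) := card_biUnion_le
    _ = ∑ b ∈ Icc 1 d, (#s).choose b := by simp only [card_powersetCard]
    _ ≤ #s * n ^ (d - 1) := sum_Icc_choose_le hn hs d

section Pairs

variable (κ : Type*) [Fintype κ] [DecidableEq κ]

def xPairs (d x : ℕ) : Finset (Finset κ × Finset κ) :=
  {p | Disjoint p.1 p.2 ∧ #p.1 ≤ x ∧ 1 ≤ #p.2 ∧ #p.2 ≤ d}

variable {κ}

lemma card_filter_xPairs_le {d x : ℕ} (hd : 0 < d) (hn : 2 ≤ Fintype.card κ) (a : ℕ) :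
    Fintype.card κ * #{p ∈ xPairs κ d x | #p.1 = a} ≤
      (Fintype.card κ - a) * Fintype.card κ ^ (d + a) := by
  set n := Fintype.card κ
  let partners (I : Finset κ) : Finset (Finset κ × Finset κ) :=
    {J ∈ Iᶜ.powerset | 1 ≤ #J ∧ #J ≤ d}.image (Prod.mk I)
  have hcount : #{p ∈ xPairs κ d x | #p.1 = a} ≤ n ^ a * ((n - a) * n ^ (d - 1)) :=
    calc #{p ∈ xPairs κ d x | #p.1 = a}
        ≤ #((powersetCard a univ).biUnion partners) := by
          refine card_le_card fun p hp => ?_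
          simp only [xPairs, mem_filter, mem_univ, true_and] at hp
          obtain ⟨⟨hdisj, -, hJ⟩, rfl⟩ := hp
          refine mem_biUnion.mpr ⟨p.1, mem_powersetCard_univ.mpr rfl, mem_image.mpr ⟨p.2, ?_, rfl⟩⟩
          exact mem_filter.mpr ⟨mem_powerset.mpr (subset_compl_iff_disjoint_left.mpr hdisj), hJ⟩
      _ ≤ #(powersetCard a (univ : Finset κ)) * ((n - a) * n ^ (d - 1)) := by
          refine card_biUnion_le_card_mul _ _ _ fun I hI => ?_
          rw [mem_powersetCard_univ] at hI
          calc #(partners I) ≤ #{J ∈ Iᶜ.powerset | 1 ≤ #J ∧ #J ≤ d} := card_image_le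
            _ ≤ #Iᶜ * n ^ (d - 1) := card_filter_powerset_le _ hn (card_le_univ _) d
            _ = (n - a) * n ^ (d - 1) := by rw [card_compl, hI]
      _ ≤ n ^ a * ((n - a) * n ^ (d - 1)) := by
          rw [card_powersetCard, card_univ]
          gcongr
          exact Nat.choose_le_pow _ _
  calc n * #{p ∈ xPairs κ d x | #p.1 = a} ≤ n * (n ^ a * ((n - a) * n ^ (d - 1))) := by gcongr
    _ = (n - a) * n ^ (d + a) := by
        rw [show d + a = a + (d - 1) + 1 by omega, pow_succ, pow_add]
        ring

lemma card_filter_xPairs_le_of_lt {d x a : ℕ} (hd : 0 < d) (hn : 2 ≤ Fintype.card κ)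
    (hax : a < x) : Fintype.card κ * #{p ∈ xPairs κ d x | #p.1 = a} ≤ Fintype.card κ ^ (d + x) :=
  calc _ ≤ (Fintype.card κ - a) * Fintype.card κ ^ (d + a) := card_filter_xPairs_le hd hn a
    _ ≤ Fintype.card κ * Fintype.card κ ^ (d + a) := by gcongr; omega
    _ ≤ Fintype.card κ ^ (d + x) := by
        rw [← pow_succ']; exact Nat.pow_le_pow_right (by omega) (by omega)

lemma card_filter_xPairs_self_le {d x : ℕ} (hd : 0 < d) (hx : 0 < x)
    (hn : 2 ≤ Fintype.card κ) : Fintype.card κ * #{p ∈ xPairs κ d x | #p.1 = x} ≤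
      (Fintype.card κ - 1) * Fintype.card κ ^ (d + x) :=
  (card_filter_xPairs_le hd hn x).trans (by gcongr; omega)

lemma sum_xPairs_eq_sum_range {M : Type*} [AddCommMonoid M] (d x : ℕ) (g : ℕ → M) :
    ∑ p ∈ xPairs κ d x, g #p.1 = ∑ a ∈ range (x + 1), #{p ∈ xPairs κ d x | #p.1 = a} • g a := by
  rw [← sum_fiberwise_of_maps_to (g := fun p => #p.1) (t := range (x + 1))]
  · refine sum_congr rfl fun a _ => ?_
    rw [sum_congr rfl fun p hp => by rw [(mem_filter.mp hp).2], sum_const]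
  · intro p hp
    simp only [xPairs, mem_filter, mem_univ, true_and] at hp
    exact mem_range.mpr (Nat.lt_succ_of_le hp.2.1)

lemma one_sub_pow_le_inv_pow {t N : ℝ} {k m : ℕ} (ht1 : t ≤ 1) (hN : 0 < N)
    (h : k * Real.log N ≤ m * t) : (1 - t) ^ m ≤ (N ^ k)⁻¹ :=
  calc (1 - t) ^ m ≤ Real.exp (-t) ^ m :=
        pow_le_pow_left₀ (sub_nonneg.mpr ht1) (Real.one_sub_le_exp_neg t) m
    _ = Real.exp (-(m * t)) := by rw [← Real.exp_nat_mul, mul_neg]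
    _ ≤ Real.exp (-Real.log (N ^ k)) := by
        rw [Real.log_pow]
        exact Real.exp_le_exp.mpr (neg_le_neg h)
    _ = (N ^ k)⁻¹ := by rw [Real.exp_neg, Real.exp_log (pow_pos hN k)]

lemma one_sub_inv_two_pow_nonneg (a : ℕ) : 0 ≤ 1 - ((2 : ℝ) ^ a)⁻¹ :=
  sub_nonneg.mpr (inv_le_one_of_one_le₀ (one_le_pow₀ one_le_two))

lemma one_sub_inv_two_pow_pow_le_sq {a x : ℕ} (hax : a < x) (m : ℕ) :
    (1 - ((2 : ℝ) ^ (a + 1))⁻¹) ^ m ≤ ((1 - ((2 : ℝ) ^ (x + 1))⁻¹) ^ m) ^ 2 := by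
  have hdouble : 2 * ((2 : ℝ) ^ (x + 1))⁻¹ ≤ ((2 : ℝ) ^ (a + 1))⁻¹ := by
    rw [pow_succ, mul_inv, mul_comm, mul_assoc, inv_mul_cancel₀ two_ne_zero, mul_one]
    exact inv_anti₀ (by positivity) (pow_le_pow_right₀ one_le_two hax)
  rw [← pow_mul, mul_comm, pow_mul]
  gcongr
  · exact one_sub_inv_two_pow_nonneg _
  · nlinarith [sq_nonneg ((2 : ℝ) ^ (x + 1))⁻¹]

lemma sum_xPairs_lt_one {d x m : ℕ} (hd : 0 < d) (hx : 0 < x) (hn : d + x ≤ Fintype.card κ)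
    (hm : (2 : ℝ) ^ (x + 1) * (d + x) * Real.log (Fintype.card κ) ≤ m) :
    ∑ p ∈ xPairs κ d x, (1 - ((2 : ℝ) ^ (#p.1 + 1))⁻¹) ^ m < 1 := by
  set n := Fintype.card κ
  set N : ℝ := (n : ℝ)
  set M : ℝ := N ^ (d + x)
  let f (a : ℕ) : ℝ := (1 - ((2 : ℝ) ^ (a + 1))⁻¹) ^ m
  let c (a : ℕ) : ℝ := #{p ∈ xPairs κ d x | #p.1 = a}
  have hN : (2 : ℝ) ≤ N := Nat.ofNat_le_cast.mpr (by omega)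
  have hM : 0 < M := by positivity
  have hf0 (a : ℕ) : 0 ≤ f a := pow_nonneg (one_sub_inv_two_pow_nonneg _) m
  have hfx : f x ≤ M⁻¹ := by
    refine one_sub_pow_le_inv_pow (inv_le_one_of_one_le₀ (one_le_pow₀ one_le_two))
      (by positivity) ?_
    rw [le_mul_inv_iff₀ (by positivity)]
    push_cast
    linarith
  have hfa (a : ℕ) (hax : a < x) : f a ≤ M⁻¹ ^ 2 :=
    (one_sub_inv_two_pow_pow_le_sq hax m).trans (pow_le_pow_left₀ (hf0 x) hfx 2)
  have hca (a : ℕ) (hax : a < x) : c a ≤ M / N := by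
    rw [le_div_iff₀ (by positivity), mul_comm]
    simp only [c, M, N]
    exact_mod_cast card_filter_xPairs_le_of_lt hd (by omega) hax
  have hcx : c x ≤ (N - 1) * M / N := by
    rw [le_div_iff₀ (by positivity), mul_comm]
    have := card_filter_xPairs_self_le (κ := κ) hd hx (by omega)
    rw [← Nat.cast_le (α := ℝ), Nat.cast_mul, Nat.cast_mul, Nat.cast_sub (by omega)] at this
    simpa [c, M, N] using this
  have hxM : (x : ℝ) < M := by
    simp only [M, N]
    exact_mod_cast Nat.lt_two_pow_self.trans_le
      ((Nat.pow_le_pow_left (by omega) x).trans (Nat.pow_le_pow_right (by omega) (by omega)))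
  calc ∑ p ∈ xPairs κ d x, f #p.1
      = ∑ a ∈ range x, c a * f a + c x * f x := by
        rw [sum_xPairs_eq_sum_range, sum_range_succ]
        simp only [nsmul_eq_mul, c]
    _ ≤ ∑ a ∈ range x, M / N * M⁻¹ ^ 2 + (N - 1) * M / N * M⁻¹ := by
        gcongr with a ha
        · exact hf0 a
        · exact hca a (mem_range.mp ha)
        · exact hfa a (mem_range.mp ha)
        · exact hf0 x
        · exact div_nonneg (mul_nonneg (by linarith) hM.le) (by positivity)
    _ = x / M * N⁻¹ + (1 - N⁻¹) := by
        rw [sum_const, card_range, nsmul_eq_mul]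
        field_simp
    _ < 1 * N⁻¹ + (1 - N⁻¹) := by
        gcongr
        exact (div_lt_one hM).mpr hxM
    _ = 1 := by ring

end Pairs

theorem xcode_probabilistic_existence_general (d x n m : ℕ) (hd : 0 < d) (hx : 0 < x)
    (hn : max (2 * d) (d + x) ≤ n)
    (h : (2 : ℝ) ^ (x + 1) * ((d : ℝ) + (x : ℝ)) * Real.log n ≤ (m : ℝ)) :
    ∃ X : Finset (Fin m → ZMod 2), X.card = n ∧ IsXCode d x X := by
  let good (p : Finset (Fin n) × Finset (Fin n)) : Finset (Fin n → ZMod 2) :=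
    {v | ∑ i ∈ p.2, v i = 1 ∧ ∀ i ∈ p.1, v i = 0}
  have density (p) (hp : p ∈ xPairs (Fin n) d x) :
      (#(good p) : ℝ) / Fintype.card (Fin n → ZMod 2) = ((2 : ℝ) ^ (#p.1 + 1))⁻¹ := by
    simp only [xPairs, mem_filter, mem_univ, true_and] at hp
    convert card_filter_div_card_eq_inv_two_pow hp.1 (card_pos.mp hp.2.2.1)
  obtain ⟨ω, hω⟩ := exists_forall_exists_mem_of_sum_lt_one (ι := Fin m) (xPairs (Fin n) d x) good
    (by
      rw [Fintype.card_fin, sum_congr rfl fun p hp => by rw [density p hp]]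
      exact sum_xPairs_lt_one hd hx (by simpa using (le_max_right _ _).trans hn) (by simpa using h))
  have hu : IsXFamily d x fun i j => ω j i := fun I J hdisj h₁ h₂ h₂' => by
    simpa [good] using hω (I, J) (mem_filter.mpr ⟨mem_univ _, hdisj, h₁, h₂, h₂'⟩)
  have hinj := hu.injective hd hx
  exact ⟨univ.image _, by rw [card_image_of_injective _ hinj, card_fin], hu.isXCode_image hinj⟩

/-- Probabilistic existence: for positive integers `d, x`, any `n ≥ max{2d, d+x}`, and
any positive integer `m ≥ 2^{x+1}·(d+x)·ln n`, there exists an `(m,n,d,x)` X-code. -/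
theorem xcode_probabilistic_existence (d x n m : ℕ) (hd : 0 < d) (hx : 0 < x)
    (hn : max (2 * d) (d + x) ≤ n) (hm : 0 < m)
    (h : (2 : ℝ) ^ (x + 1) * ((d : ℝ) + (x : ℝ)) * Real.log n ≤ (m : ℝ)) :
    ∃ X : Finset (Fin m → ZMod 2), X.card = n ∧ IsXCode d x X :=
  xcode_probabilistic_existence_general d x n m hd hx hn h
end
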